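/- arXiv:2604.12937 — 2 statements merged into one kernel-verified Lean document; each statement's English description precedes it below -/
import Mathlib

section
/- Let V be a grading-restricted vertex algebra and W a lower-bounded generalized V-module. Then the linear map ϑ_{Gr(W)}: U^∞(V) → End Gr(W) defined by ϑ_{Gr(W)}([v]_{kl})[w]_n = δ_{ln} [Res_x x^{l−k−1} Y_W(x^{L(0)} v, x) w]_k is an algebra homomorphism from U^∞(V) equipped with the product ⋄ to End Gr(W); that is, Gr(W) is a U^∞(V)-module. -/
noncomputable section

open scoped BigOperators

/-- The generalized binomial coefficient `C(m, k)` for `m : ℤ`, as a complex number. -/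
def cchoose (m : ℤ) (k : ℕ) : ℂ :=
  (∏ i ∈ Finset.range k, ((m : ℂ) - (i : ℂ))) / (k.factorial : ℂ)

/-- A grading-restricted vertex algebra structure on a complex vector space `V`,
presented via the projections `proj n` onto the weight spaces `V_(n)` and the
modes `mode u n = u_n` of the vertex operator `Y(u,x) = ∑ u_n x^{-n-1}`. -/
structure GRVertexAlgebra (V : Type) [AddCommGroup V] [Module ℂ V] : Type where
  /-- projection onto the weight-`n` subspace `V_(n)` -/
  proj : ℤ → V →ₗ[ℂ] V
  /-- `mode u n v = u_n v` -/
  mode : V → ℤ → V → V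
  /-- the vacuum vector `𝟙` -/
  one : V
  mode_add_left : ∀ (u u' : V) (n : ℤ) (v : V),
    mode (u + u') n v = mode u n v + mode u' n v
  mode_smul_left : ∀ (c : ℂ) (u : V) (n : ℤ) (v : V),
    mode (c • u) n v = c • mode u n v
  mode_add_right : ∀ (u : V) (n : ℤ) (v v' : V),
    mode u n (v + v') = mode u n v + mode u n v'
  mode_smul_right : ∀ (u : V) (n : ℤ) (c : ℂ) (v : V),
    mode u n (c • v) = c • mode u n v
  proj_idem : ∀ (m n : ℤ) (v : V), proj m (proj n v) = if m = n then proj n v else 0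
  proj_support_finite : ∀ v : V, (Function.support fun n : ℤ => proj n v).Finite
  proj_sum : ∀ v : V, (∑ᶠ n : ℤ, proj n v) = v
  /-- each weight space is finite dimensional -/
  grading_finite_dim : ∀ n : ℤ, FiniteDimensional ℂ (LinearMap.range (proj n))
  /-- the grading is bounded below -/
  grading_bounded_below : ∃ N : ℤ, ∀ n : ℤ, n < N → proj n = 0
  /-- lower truncation: `u_n v = 0` for `n` sufficiently large -/
  lower_trunc : ∀ u v : V, ∃ N : ℤ, ∀ n : ℤ, N ≤ n → mode u n v = 0
  /-- the vacuum is homogeneous of weight `0` -/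
  one_homogeneous : proj 0 one = one
  /-- identity property `Y(𝟙,x) = 1` -/
  identity_prop : ∀ (n : ℤ) (v : V), mode one n v = if n = -1 then v else 0
  /-- creation property, regular part -/
  creation : ∀ (u : V) (n : ℤ), 0 ≤ n → mode u n one = 0
  /-- creation property, constant term: `lim_{x→0} Y(u,x)𝟙 = u` -/
  creation_limit : ∀ u : V, mode u (-1) one = u
  /-- the Jacobi identity, in terms of modes -/
  jacobi : ∀ (a b c : V) (l m n : ℤ),
      (∑ᶠ i : ℕ, cchoose m i • mode (mode a (l + i) b) (m + n - i) c)
    = (∑ᶠ i : ℕ, ((-1 : ℂ) ^ (i : ℕ) * cchoose l i) • mode a (m + l - i) (mode b (n + i) c))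
      - (∑ᶠ i : ℕ, ((-1 : ℂ) ^ (l + i : ℤ) * cchoose l i) •
          mode b (n + l - i) (mode a (m + i) c))
  /-- `L(0)`-bracket formula, where `L(0) v = ∑ n • proj n v` -/
  L0_bracket : ∀ (a v : V) (n : ℤ),
      (∑ᶠ m : ℤ, (m : ℂ) • proj m (mode a n v)) - mode a n (∑ᶠ m : ℤ, (m : ℂ) • proj m v)
    = mode (∑ᶠ m : ℤ, (m : ℂ) • proj m a) n v + (-(n : ℂ) - 1) • mode a n v
  /-- `L(-1)`-derivative formula, where `L(-1) u = u_{-2} 𝟙`: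
  `Y(L(-1)u, x) = (d/dx) Y(u,x)` -/
  Lneg1_deriv : ∀ (u v : V) (n : ℤ),
      mode (mode u (-2) one) n v = (-(n : ℂ)) • mode u (n - 1) v
  /-- `L(-1)`-bracket formula: `[L(-1), Y(u,x)] = Y(L(-1)u, x)` -/
  Lneg1_bracket : ∀ (u v : V) (n : ℤ),
      mode (mode u n v) (-2) one - mode u n (mode v (-2) one)
    = mode (mode u (-2) one) n v

namespace GRVertexAlgebra

variable {V : Type} [AddCommGroup V] [Module ℂ V]

/-- The operator `L(0)`. -/
def L0op (VA : GRVertexAlgebra V) (v : V) : V := ∑ᶠ m : ℤ, (m : ℂ) • VA.proj m v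

/-- The operator `L(-1)`. -/
def Lneg1op (VA : GRVertexAlgebra V) (v : V) : V := VA.mode v (-2) VA.one

/-- `u` is homogeneous (of some weight). -/
def Homogeneous (VA : GRVertexAlgebra V) (u : V) : Prop := ∃ w : ℤ, VA.proj w u = u

lemma mode_zero_left (VA : GRVertexAlgebra V) (n : ℤ) (v : V) : VA.mode 0 n v = 0 := by
  simpa using VA.mode_smul_left 0 0 n v

lemma mode_zero_right (VA : GRVertexAlgebra V) (u : V) (n : ℤ) : VA.mode u n 0 = 0 := by
  simpa using VA.mode_smul_right u n 0 0

/-- `Res_x x^N (1+x)^{l + L(0)-weight} Y(u, x) v`, i.e. the residue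
`Res_x x^N (1+x)^l Y((1+x)^{L(0)} u, x) v`, expressed in terms of modes and the
homogeneous components of `u`. -/
def resPow (VA : GRVertexAlgebra V) (N l : ℤ) (u v : V) : V :=
  ∑ᶠ m : ℤ, ∑ᶠ i : ℕ, cchoose (l + m) i • VA.mode (VA.proj m u) (N + i) v

end GRVertexAlgebra

section UInf

variable (V : Type) [AddCommGroup V] [Module ℂ V]

/-- The space of column-finite `ℕ × ℕ` matrices with entries in `V`, as a submodule of
the space of all doubly indexed families. -/
def UInfSub : Submodule ℂ (ℕ → ℕ → V) where
  carrier := {A | ∀ l : ℕ, (Function.support fun k => A k l).Finite}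
  add_mem' := by
    intro A B hA hB l
    refine Set.Finite.subset ((hA l).union (hB l)) ?_
    intro k hk
    by_contra h
    simp only [Set.mem_union, Function.mem_support, not_or, not_not] at h
    exact hk (by simp [Pi.add_apply, h.1, h.2])
  zero_mem' := by
    intro l
    simp [Function.support]
  smul_mem' := by
    intro c A hA l
    refine Set.Finite.subset (hA l) ?_
    intro k hk
    by_contra h
    simp only [Function.mem_support, not_not] at h
    exact hk (by simp [Pi.smul_apply, h])

/-- `U^∞(V)`: column-finite `ℕ × ℕ` matrices with entries in `V`. -/
def UInf : Type := ↥(UInfSub V)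

instance : AddCommGroup (UInf V) := by unfold UInf; infer_instance
instance : Module ℂ (UInf V) := by unfold UInf; infer_instance

end UInf

namespace GRVertexAlgebra

variable {V : Type} [AddCommGroup V] [Module ℂ V]

/-- `[v]_{kl} = v ⊗ E_{kl}`, the matrix with entry `v` in position `(k,l)` and `0` elsewhere. -/
def Usingle (v : V) (k l : ℕ) : UInf V :=
  ⟨fun k' l' => if k' = k ∧ l' = l then v else 0, by
    intro l'
    refine Set.Finite.subset (Set.finite_singleton k) ?_
    intro k' hk'
    simp only [Function.mem_support] at hk'
    by_contra h
    simp only [Set.mem_singleton_iff] at h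
    exact hk' (by simp [h])⟩

/-- The `(k,l)` entry of the product `[u]_{kn} ⋄ [v]_{nl}`:
`∑_{m=0}^{n} C(-k+n-l-1, m) Res_x x^{-k+n-l-m-1} (1+x)^l Y((1+x)^{L(0)} u, x) v`. -/
def diamondEntry (VA : GRVertexAlgebra V) (u v : V) (k n l : ℕ) : V :=
  ∑ m ∈ Finset.range (n + 1),
    cchoose (-(k : ℤ) + n - l - 1) m • VA.resPow (-(k : ℤ) + n - l - m - 1) l u v

lemma resPow_zero_left (VA : GRVertexAlgebra V) (N l : ℤ) (v : V) :
    VA.resPow N l 0 v = 0 := by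
  unfold GRVertexAlgebra.resPow
  have h : ∀ m : ℤ, (∑ᶠ i : ℕ, cchoose (l + m) i • VA.mode (VA.proj m (0 : V)) (N + i) v) = 0 := by
    intro m
    have : ∀ i : ℕ, cchoose (l + m) i • VA.mode (VA.proj m (0 : V)) (N + i) v = 0 := by
      intro i
      rw [map_zero, VA.mode_zero_left]
      simp
    simp only [this]
    exact finsum_zero
  simp only [h]
  exact finsum_zero

lemma resPow_zero_right (VA : GRVertexAlgebra V) (N l : ℤ) (u : V) :
    VA.resPow N l u 0 = 0 := by
  unfold GRVertexAlgebra.resPow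
  have h : ∀ m : ℤ, (∑ᶠ i : ℕ, cchoose (l + m) i • VA.mode (VA.proj m u) (N + i) (0 : V)) = 0 := by
    intro m
    have : ∀ i : ℕ, cchoose (l + m) i • VA.mode (VA.proj m u) (N + i) (0 : V) = 0 := by
      intro i
      rw [VA.mode_zero_right]
      simp
    simp only [this]
    exact finsum_zero
  simp only [h]
  exact finsum_zero

lemma diamondEntry_zero_left (VA : GRVertexAlgebra V) (v : V) (k n l : ℕ) :
    VA.diamondEntry 0 v k n l = 0 := by
  unfold GRVertexAlgebra.diamondEntry
  simp [VA.resPow_zero_left]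

lemma diamondEntry_zero_right (VA : GRVertexAlgebra V) (u : V) (k n l : ℕ) :
    VA.diamondEntry u 0 k n l = 0 := by
  unfold GRVertexAlgebra.diamondEntry
  simp [VA.resPow_zero_right]

/-- The product `⋄` on `U^∞(V)`. -/
def udiamond (VA : GRVertexAlgebra V) (A B : UInf V) : UInf V :=
  ⟨fun k l => ∑ᶠ n : ℕ, VA.diamondEntry (A.1 k n) (B.1 n l) k n l, by
    intro l
    refine Set.Finite.subset
      (Set.Finite.biUnion (B.2 l) (fun n _ => A.2 n)) ?_
    intro k hk
    simp only [Function.mem_support] at hk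
    by_contra h
    apply hk
    have hterm : ∀ n : ℕ, VA.diamondEntry (A.1 k n) (B.1 n l) k n l = 0 := by
      intro n
      by_cases hB : B.1 n l = 0
      · rw [hB]; exact VA.diamondEntry_zero_right _ _ _ _
      · have hA : A.1 k n = 0 := by
          by_contra hA
          exact h (Set.mem_biUnion (by exact hB) (by exact hA))
        rw [hA]; exact VA.diamondEntry_zero_left _ _ _ _
    simp only [hterm]
    exact finsum_zero⟩

end GRVertexAlgebra
/-- A lower-bounded generalized module for a grading-restricted vertex algebra,
presented via the mode action `wmode`, the projections `wproj μ` onto the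
(generalized-eigenvalue) weight spaces `W_(μ)`, and the operators `L_W(0)`, `L_W(-1)`. -/
structure LBGModule {V : Type} [AddCommGroup V] [Module ℂ V]
    (VA : GRVertexAlgebra V) (W : Type) [AddCommGroup W] [Module ℂ W] : Type where
  /-- `wmode u n w = u_n w`, the modes of `Y_W(u,x) = ∑ u_n x^{-n-1}` -/
  wmode : V → ℤ → W → W
  /-- projection onto the weight-`μ` subspace `W_(μ)` -/
  wproj : ℂ → W →ₗ[ℂ] W
  /-- the operator `L_W(0)` -/
  LW0 : W →ₗ[ℂ] W
  /-- the operator `L_W(-1)` -/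
  LW1 : W →ₗ[ℂ] W
  wmode_add_left : ∀ (u u' : V) (n : ℤ) (w : W),
    wmode (u + u') n w = wmode u n w + wmode u' n w
  wmode_smul_left : ∀ (c : ℂ) (u : V) (n : ℤ) (w : W),
    wmode (c • u) n w = c • wmode u n w
  wmode_add_right : ∀ (u : V) (n : ℤ) (w w' : W),
    wmode u n (w + w') = wmode u n w + wmode u n w'
  wmode_smul_right : ∀ (u : V) (n : ℤ) (c : ℂ) (w : W),
    wmode u n (c • w) = c • wmode u n w
  wproj_idem : ∀ (μ ν : ℂ) (w : W), wproj μ (wproj ν w) = if μ = ν then wproj ν w else 0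
  wproj_support_finite : ∀ w : W, (Function.support fun μ : ℂ => wproj μ w).Finite
  wproj_sum : ∀ w : W, (∑ᶠ μ : ℂ, wproj μ w) = w
  /-- the grading is bounded below in real part -/
  grading_bounded_below : ∃ B : ℝ, ∀ μ : ℂ, μ.re < B → wproj μ = 0
  /-- lower truncation -/
  lower_trunc : ∀ (u : V) (w : W), ∃ N : ℤ, ∀ n : ℤ, N ≤ n → wmode u n w = 0
  /-- identity property `Y_W(𝟙,x) = 1` -/
  identity_prop : ∀ (n : ℤ) (w : W), wmode VA.one n w = if n = -1 then w else 0
  /-- the Jacobi identity for the module -/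
  jacobi : ∀ (a b : V) (w : W) (l m n : ℤ),
      (∑ᶠ i : ℕ, cchoose m i • wmode (VA.mode a (l + i) b) (m + n - i) w)
    = (∑ᶠ i : ℕ, ((-1 : ℂ) ^ (i : ℕ) * cchoose l i) • wmode a (m + l - i) (wmode b (n + i) w))
      - (∑ᶠ i : ℕ, ((-1 : ℂ) ^ (l + i : ℤ) * cchoose l i) •
          wmode b (n + l - i) (wmode a (m + i) w))
  /-- `W_(μ)` is the generalized eigenspace of `L_W(0)` with eigenvalue `μ` -/
  gen_eigenspace : ∀ (μ : ℂ) (w : W),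
    ∃ k : ℕ, (((LW0 - μ • LinearMap.id : Module.End ℂ W) ^ k) : W →ₗ[ℂ] W) (wproj μ w) = 0
  gen_eigenspace_mem : ∀ (μ : ℂ) (w : W),
    (∃ k : ℕ, (((LW0 - μ • LinearMap.id : Module.End ℂ W) ^ k) : W →ₗ[ℂ] W) w = 0) → wproj μ w = w
  /-- `L_W(0)`-bracket formula -/
  LW0_bracket : ∀ (a : V) (w : W) (n : ℤ),
      LW0 (wmode a n w) - wmode a n (LW0 w)
    = wmode (∑ᶠ m : ℤ, (m : ℂ) • VA.proj m a) n w + (-(n : ℂ) - 1) • wmode a n w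
  /-- `L_W(-1)`-derivative formula: `Y_W(L(-1)u, x) = (d/dx) Y_W(u,x)` -/
  LW1_deriv : ∀ (u : V) (w : W) (n : ℤ),
      wmode (VA.mode u (-2) VA.one) n w = (-(n : ℂ)) • wmode u (n - 1) w
  /-- `L_W(-1)`-bracket formula -/
  LW1_bracket : ∀ (u : V) (w : W) (n : ℤ),
      LW1 (wmode u n w) - wmode u n (LW1 w) = wmode (VA.mode u (-2) VA.one) n w

namespace LBGModule

variable {V : Type} [AddCommGroup V] [Module ℂ V] {VA : GRVertexAlgebra V}
variable {W : Type} [AddCommGroup W] [Module ℂ W]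

lemma wmode_zero_left (M : LBGModule VA W) (n : ℤ) (w : W) : M.wmode 0 n w = 0 := by
  simpa using M.wmode_smul_left 0 0 n w

lemma wmode_zero_right (M : LBGModule VA W) (u : V) (n : ℤ) : M.wmode u n 0 = 0 := by
  simpa using M.wmode_smul_right u n 0 0

/-- `Ω_n(W) = {w ∈ W : v_k w = 0 for homogeneous v with wt v - k - 1 < -n}`
(for `n < 0` this is automatically `{0}`, matching `Ω_{-1}(W) = 0`). -/
def OmegaSet (M : LBGModule VA W) (n : ℤ) : Set W :=
  {w : W | ∀ (m k : ℤ) (v : V), m - k - 1 < -n → M.wmode (VA.proj m v) k w = 0}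

/-- `ϑ_{Gr(W)}([v]_{kl})` applied to a representative `w`:
`Res_x x^{l-k-1} Y_W(x^{L(0)} v, x) w`. -/
def wAct (M : LBGModule VA W) (v : V) (k l : ℕ) (w : W) : W :=
  ∑ᶠ m : ℤ, M.wmode (VA.proj m v) ((l : ℤ) - (k : ℤ) - 1 + m) w

end LBGModule

namespace GRVertexAlgebra

variable {V : Type} [AddCommGroup V] [Module ℂ V]

/-- Membership in `Q^∞(V)`: `A` acts as zero on `Gr(W)` for every lower-bounded
generalized `V`-module `W`.  Here the action of `A` on `[w]_n ∈ Gr_n(W)` has component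
`[ϑ([A_{kn}]_{kn}) w]_k` in `Gr_k(W)`, which vanishes in `Gr_k(W) = Ω_k(W)/Ω_{k-1}(W)`
exactly when the representative lies in `Ω_{k-1}(W)`. -/
def memQ (VA : GRVertexAlgebra V) (A : UInf V) : Prop :=
  ∀ (W : Type) (_ : AddCommGroup W) (_ : Module ℂ W) (M : LBGModule VA W)
    (n k : ℕ) (w : W), w ∈ M.OmegaSet n →
      M.wAct (A.1 k n) k n w ∈ M.OmegaSet ((k : ℤ) - 1)

/-- The generators of `O^∞_∘(V)` living in position `(k,l)`:
`Res_x x^{-k-l-p-2} (1+x)^l Y((1+x)^{L(0)} u, x) v`. -/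
def circExpr (VA : GRVertexAlgebra V) (u v : V) (k l p : ℕ) : V :=
  VA.resPow (-(k : ℤ) - l - p - 2) l u v

/-- Membership in `O^∞_∘(V)`: each entry of `A` is a (finite) linear combination of the
generators `Res_x x^{-k-l-p-2} (1+x)^l [Y((1+x)^{L(0)} u, x) v]_{kl}`; since each generator
is concentrated in a single position `(k,l)`, an infinite linear combination in which each
pair `(k,l)` appears only finitely many times is exactly a column-finite matrix each of whose
entries lies in the corresponding span. -/
def memOcirc (VA : GRVertexAlgebra V) (A : UInf V) : Prop :=
  ∀ k l : ℕ, A.1 k l ∈ Submodule.span ℂ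
    {x : V | ∃ (u v : V) (p : ℕ), x = VA.circExpr u v k l p}

/-- The element `(L(-1) + L(0) + l - k) v`. -/
def LLExpr (VA : GRVertexAlgebra V) (k l : ℕ) (v : V) : V :=
  VA.Lneg1op v + VA.L0op v + (((l : ℂ) - (k : ℂ)) • v)

/-- Membership in `O^∞(V)`. -/
def memO (VA : GRVertexAlgebra V) (A : UInf V) : Prop :=
  ∀ k l : ℕ, A.1 k l ∈ Submodule.span ℂ
    ({x : V | ∃ (u v : V) (p : ℕ), x = VA.circExpr u v k l p}
      ∪ {x : V | ∃ v : V, x = VA.LLExpr k l v})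

end GRVertexAlgebra
namespace GRVertexAlgebra

variable {V : Type} [AddCommGroup V] [Module ℂ V]

/-- Huang's Jacobi-identity element of `U^∞(V)` attached to `u, v ∈ V` with `v`
homogeneous of weight `wtv`, and integers `k ∈ ℕ`, `l, p, n ∈ ℤ` with `l + p ∈ ℕ`:
`∑_{j, n+p-j ≥ 0} (-1)^j C(p,j) [v]_{k,n+p-j} ⋄ [u]_{n+p-j,l+p}`
`- ∑_{j, l-n+k+p-j ≥ 0} (-1)^{p-j} C(p,j) [u]_{k,l-n+k+p-j} ⋄ [v]_{l-n+k+p-j,l+p}`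
`- ∑_{j ∈ ℕ} C(wt v + n - k - 1, j) [v_{p+j} u]_{k,l+p}`. -/
def jElt (VA : GRVertexAlgebra V) (u v : V) (wtv : ℤ) (k : ℕ) (l p n : ℤ) : UInf V :=
  (∑ᶠ j : ℕ, if (j : ℤ) ≤ n + p then
      ((-1 : ℂ) ^ (j : ℕ) * cchoose p j) •
        VA.udiamond (Usingle v k (n + p - j).toNat)
          (Usingle u (n + p - j).toNat (l + p).toNat)
    else 0)
  - (∑ᶠ j : ℕ, if (j : ℤ) ≤ l - n + (k : ℤ) + p then
      ((-1 : ℂ) ^ ((p : ℤ) - (j : ℤ)) * cchoose p j) •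
        VA.udiamond (Usingle u k (l - n + (k : ℤ) + p - j).toNat)
          (Usingle v (l - n + (k : ℤ) + p - j).toNat (l + p).toNat)
    else 0)
  - Usingle (∑ᶠ j : ℕ, cchoose (wtv + n - (k : ℤ) - 1) j • VA.mode v (p + j) u)
      k (l + p).toNat

/-- The `(k, l+p)` entry of the Jacobi-identity element `jElt`, written out in terms of
residues as in the paper. -/
def jEntry (VA : GRVertexAlgebra V) (u v : V) (wtv : ℤ) (k : ℕ) (l p n : ℤ) : V :=
  (∑ᶠ j : ℕ, if (j : ℤ) ≤ n + p then
      ((-1 : ℂ) ^ (j : ℕ) * cchoose p j) •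
        VA.diamondEntry v u k (n + p - j).toNat (l + p).toNat
    else 0)
  - (∑ᶠ j : ℕ, if (j : ℤ) ≤ l - n + (k : ℤ) + p then
      ((-1 : ℂ) ^ ((p : ℤ) - (j : ℤ)) * cchoose p j) •
        VA.diamondEntry u v k (l - n + (k : ℤ) + p - j).toNat (l + p).toNat
    else 0)
  - (∑ᶠ j : ℕ, cchoose (wtv + n - (k : ℤ) - 1) j • VA.mode v (p + j) u)

/-- The set of generating elements of `J^∞(V)`. -/
def JSet (VA : GRVertexAlgebra V) : Set (UInf V) :=
  {A : UInf V | ∃ (u v : V) (wtv : ℤ) (k : ℕ) (l p n : ℤ),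
    VA.proj wtv v = v ∧ 0 ≤ l + p ∧ A = VA.jElt u v wtv k l p n}

/-- The set `O^∞(V)` of Huang, as a subset of `U^∞(V)`. -/
def OSet (VA : GRVertexAlgebra V) : Set (UInf V) := {A : UInf V | VA.memO A}

end GRVertexAlgebra

/-- A vertex operator algebra: a grading-restricted vertex algebra together with a
conformal vector `ω` whose modes `L(n) = ω_{n+1}` give a representation of the Virasoro
algebra, recover the grading operator `L(0)`, and satisfy the `L(-1)`-property. -/
structure VertexOperatorAlgebra (V : Type) [AddCommGroup V] [Module ℂ V]
    extends GRVertexAlgebra V : Type where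
  /-- the conformal vector -/
  omega : V
  /-- the central charge -/
  centralCharge : ℂ
  /-- the Virasoro relations for `L(n) = ω_{n+1}` -/
  virasoro : ∀ (m n : ℤ) (v : V),
      mode omega (m + 1) (mode omega (n + 1) v) - mode omega (n + 1) (mode omega (m + 1) v)
    = ((m : ℂ) - (n : ℂ)) • mode omega (m + n + 1) v
      + (if m + n = 0 then (((m ^ 3 - m : ℤ) : ℂ) / 12) * centralCharge else 0) • v
  /-- `L(0) = ω_1` is the grading operator -/
  omega_L0 : ∀ v : V, mode omega 1 v = ∑ᶠ m : ℤ, (m : ℂ) • proj m v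
  /-- `L(-1) = ω_0` -/
  omega_Lneg1 : ∀ v : V, mode omega 0 v = mode v (-2) one

namespace GRVertexAlgebra

variable {V : Type} [AddCommGroup V] [Module ℂ V]

/-- The circle product `u ∘_n v = Res_x (1+x)^{wt u + n} Y(u,x) v / x^{2n+2}`
(for `u` homogeneous; `resPow` inserts the weight of each homogeneous component). -/
def circN (VA : GRVertexAlgebra V) (n : ℕ) (u v : V) : V :=
  VA.resPow (-(2 * (n : ℤ)) - 2) n u v

/-- The subspace `O_n(V)`, spanned by the `u ∘_n v` for homogeneous `u` and all `v`, and
by the `(L(-1) + L(0)) v`. -/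
def ZhuO (VA : GRVertexAlgebra V) (n : ℕ) : Submodule ℂ V :=
  Submodule.span ℂ
    ({x : V | ∃ u v : V, VA.Homogeneous u ∧ x = VA.circN n u v}
      ∪ {x : V | ∃ v : V, x = VA.Lneg1op v + VA.L0op v})

/-- The product `u *_n v` of Dong–Li–Mason (for `u` homogeneous, extended linearly):
`∑_{m=0}^{n} (-1)^m C(m+n, n) Res_x (1+x)^{wt u + n} Y(u,x) v / x^{n+m+1}`. -/
def starN (VA : GRVertexAlgebra V) (n : ℕ) (u v : V) : V :=
  ∑ m ∈ Finset.range (n + 1),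
    ((-1 : ℂ) ^ (m : ℕ) * ((m + n).choose n : ℂ)) •
      VA.resPow (-(n : ℤ) - m - 1) n u v

end GRVertexAlgebra

/-- The monomial `α(-i_1) ⋯ α(-i_j) 𝟙` of the rank one Heisenberg vertex operator algebra,
indexed by the multiset `{i_1, …, i_j}` of positive integers; here `a = α(-1)𝟙` so that
`α(m) = a_m`. -/
def heisMono {V : Type} [AddCommGroup V] [Module ℂ V]
    (VA : GRVertexAlgebra V) (a : V) (μ : Multiset ℕ+) : V :=
  (μ.sort (· ≤ ·)).foldr (fun i v => VA.mode a (-(i : ℤ)) v) VA.one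

/-- The rank one Heisenberg vertex operator algebra `M(1)`: a vertex operator algebra
with a weight-one element `a = α(-1)𝟙` whose modes `α(m) = a_m` satisfy the rank one
Heisenberg relations (with the central element acting as `1`), such that the monomials
`α(-i_1) ⋯ α(-i_j) 𝟙` form a basis, and with conformal vector `ω = (1/2) α(-1)² 𝟙`
of central charge `1`. -/
structure HeisenbergVOA (V : Type) [AddCommGroup V] [Module ℂ V]
    extends VertexOperatorAlgebra V : Type where
  /-- the element `a = α(-1)𝟙` -/
  a : V
  /-- `α(-1)𝟙` is homogeneous of weight one -/
  a_wt : proj 1 a = a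
  /-- the Heisenberg commutation relations `[α(m), α(n)] = m δ_{m+n,0}` (`c` acts as `1`) -/
  heis_comm : ∀ (m n : ℤ) (v : V),
      mode a m (mode a n v) - mode a n (mode a m v)
    = if m + n = 0 then (m : ℂ) • v else 0
  /-- `M(1) ≃ S(ĥ⁻)` linearly: the monomials `α(-i_1)⋯α(-i_j)𝟙` form a basis -/
  basis : Module.Basis (Multiset ℕ+) ℂ V
  basis_eq : ∀ μ : Multiset ℕ+, basis μ = heisMono toGRVertexAlgebra a μ
  omega_eq : omega = (1 / 2 : ℂ) • mode a (-1) a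
  centralCharge_eq : centralCharge = 1

namespace HeisenbergVOA

variable {V : Type} [AddCommGroup V] [Module ℂ V]

/-- The element
`D_n = [α(-1)𝟙]_{nn} ⋄ [α(-1)𝟙]_{nn} - [α(-1)²𝟙]_{nn} + 2n [𝟙]_{nn}` of `U^∞(M(1))`. -/
def Delt (H : HeisenbergVOA V) (n : ℕ) : UInf V :=
  H.udiamond (GRVertexAlgebra.Usingle H.a n n) (GRVertexAlgebra.Usingle H.a n n)
    - GRVertexAlgebra.Usingle (H.mode H.a (-1) H.a) n n
    + (2 * (n : ℂ)) • GRVertexAlgebra.Usingle H.one n n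

end HeisenbergVOA

namespace LBGModule

variable {V : Type} [AddCommGroup V] [Module ℂ V]
variable {W : Type} [AddCommGroup W] [Module ℂ W]

/-- `Ω(W) = {w ∈ W : α(n) w = 0 for all n > 0}` for a module `W` over the rank one
Heisenberg vertex operator algebra. -/
def smallOmega (H : HeisenbergVOA V) (M : LBGModule H.toGRVertexAlgebra W) :
    Submodule ℂ W where
  carrier := {w : W | ∀ n : ℤ, 0 < n → M.wmode H.a n w = 0}
  add_mem' := by
    intro w w' hw hw' n hn
    rw [M.wmode_add_right, hw n hn, hw' n hn, add_zero]
  zero_mem' := fun n _ => M.wmode_zero_right H.a n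
  smul_mem' := by
    intro c w hw n hn
    rw [M.wmode_smul_right, hw n hn, smul_zero]

end LBGModule
namespace HuangAux

open Function GRVertexAlgebra LBGModule

lemma cchoose_zero' (A : ℤ) : cchoose A 0 = 1 := by simp [cchoose]

lemma cchoose_trinomial (A : ℤ) (s t : ℕ) :
    cchoose A s * cchoose (A - s) t = cchoose A (s + t) * ((s + t).choose s : ℂ) := by
  unfold cchoose
  have hprod : (∏ i ∈ Finset.range s, ((A : ℂ) - i)) *
      (∏ i ∈ Finset.range t, (((A - s : ℤ) : ℂ) - i)) = ∏ i ∈ Finset.range (s + t), ((A : ℂ) - i) := by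
    rw [Finset.prod_range_add (fun i => ((A : ℂ) - i)) s t]
    congr 1
    refine Finset.prod_congr rfl fun i _ => ?_
    push_cast
    ring
  have hfac : ((s + t).choose s : ℂ) * (s.factorial : ℂ) * (t.factorial : ℂ)
      = ((s + t).factorial : ℂ) := by
    have := Nat.choose_mul_factorial_mul_factorial (Nat.le_add_right s t)
    rw [Nat.add_sub_cancel_left] at this
    exact_mod_cast congrArg (Nat.cast : ℕ → ℂ) this
  have hs : (s.factorial : ℂ) ≠ 0 := Nat.cast_ne_zero.mpr (Nat.factorial_ne_zero s)
  have ht : (t.factorial : ℂ) ≠ 0 := Nat.cast_ne_zero.mpr (Nat.factorial_ne_zero t)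
  have hst : ((s + t).factorial : ℂ) ≠ 0 := Nat.cast_ne_zero.mpr (Nat.factorial_ne_zero _)
  rw [div_mul_div_comm, hprod]
  rw [div_mul_eq_mul_div, div_eq_div_iff (mul_ne_zero hs ht) hst]
  rw [← hfac]
  ring

lemma neg_one_pow_sub (q m' : ℕ) (h : m' ≤ q) :
    ((-1 : ℂ)) ^ (q - m') = (-1 : ℂ) ^ q * (-1 : ℂ) ^ m' := by
  have h1 : ((-1 : ℂ)) ^ q = (-1 : ℂ) ^ (q - m') * (-1 : ℂ) ^ m' := by
    rw [← pow_add, Nat.sub_add_cancel h]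
  have h2 : ((-1 : ℂ)) ^ m' * ((-1 : ℂ)) ^ m' = 1 := by
    rw [← pow_add, ← two_mul, pow_mul]
    norm_num
  calc ((-1 : ℂ)) ^ (q - m') = (-1 : ℂ) ^ (q - m') * ((-1 : ℂ) ^ m' * (-1 : ℂ) ^ m') := by
        rw [h2, mul_one]
    _ = ((-1 : ℂ) ^ (q - m') * (-1 : ℂ) ^ m') * (-1 : ℂ) ^ m' := by ring
    _ = (-1 : ℂ) ^ q * (-1 : ℂ) ^ m' := by rw [← h1]

lemma cchoose_sum_delta (A : ℤ) (q : ℕ) :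
    (∑ m' ∈ Finset.range (q + 1),
      cchoose A m' * ((-1 : ℂ) ^ (q - m') * cchoose (A - m') (q - m')))
    = if q = 0 then 1 else 0 := by
  have hterm : ∀ m' ∈ Finset.range (q + 1),
      cchoose A m' * ((-1 : ℂ) ^ (q - m') * cchoose (A - m') (q - m'))
      = (cchoose A q * (-1 : ℂ) ^ q) * ((-1 : ℂ) ^ m' * ((q.choose m' : ℂ))) := by
    intro m' hm'
    have hle : m' ≤ q := Nat.lt_succ_iff.mp (Finset.mem_range.mp hm')
    have h1 : cchoose A m' * cchoose (A - m') (q - m')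
        = cchoose A q * (q.choose m' : ℂ) := by
      have := cchoose_trinomial A m' (q - m')
      rwa [Nat.add_sub_cancel' hle] at this
    rw [neg_one_pow_sub q m' hle]
    calc cchoose A m' * ((-1:ℂ) ^ q * (-1:ℂ) ^ m' * cchoose (A - m') (q - m'))
        = (cchoose A m' * cchoose (A - m') (q - m')) * ((-1:ℂ) ^ q * (-1:ℂ) ^ m') := by ring
      _ = (cchoose A q * (q.choose m' : ℂ)) * ((-1:ℂ) ^ q * (-1:ℂ) ^ m') := by rw [h1]
      _ = _ := by ring
  rw [Finset.sum_congr rfl hterm, ← Finset.mul_sum]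
  have halt : (∑ m' ∈ Finset.range (q + 1), ((-1 : ℂ) ^ m' * ((q.choose m' : ℂ))))
      = if q = 0 then 1 else 0 := by
    have h0 := Int.alternating_sum_range_choose (n := q)
    have h2 := congrArg (Int.cast : ℤ → ℂ) h0
    push_cast at h2
    exact h2
  rw [halt]
  by_cases hq : q = 0
  · subst hq; simp [cchoose_zero']
  · simp [hq]

section VSide

variable {V : Type} [AddCommGroup V] [Module ℂ V] (VA : GRVertexAlgebra V)

lemma proj_proj {α : ℤ} {u : V} (h : VA.proj α u = u) {m : ℤ} (hne : m ≠ α) :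
    VA.proj m u = 0 := by
  rw [← h, VA.proj_idem, if_neg hne]

lemma proj_of_proj (m : ℤ) (u : V) : VA.proj m (VA.proj m u) = VA.proj m u := by
  rw [VA.proj_idem, if_pos rfl]

/-- The weight of `a_t b` for homogeneous `a, b`. -/
lemma mode_homog {α β : ℤ} {a b : V} (ha : VA.proj α a = a) (hb : VA.proj β b = b) (t : ℤ) :
    VA.proj (α + β - t - 1) (VA.mode a t b) = VA.mode a t b := by
  set x := VA.mode a t b with hx
  have hb' : (∑ᶠ m : ℤ, (m : ℂ) • VA.proj m b) = (β : ℂ) • b := by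
    rw [finsum_eq_single _ β (fun m hm => by rw [proj_proj VA hb hm, smul_zero]), hb]
  have ha' : (∑ᶠ m : ℤ, (m : ℂ) • VA.proj m a) = (α : ℂ) • a := by
    rw [finsum_eq_single _ α (fun m hm => by rw [proj_proj VA ha hm, smul_zero]), ha]
  have key := VA.L0_bracket a b t
  rw [ha', hb', VA.mode_smul_right, VA.mode_smul_left] at key
  have hsum : (∑ᶠ m : ℤ, (m : ℂ) • VA.proj m x) = ((α + β - t - 1 : ℤ) : ℂ) • x := by
    have h1 : (∑ᶠ m : ℤ, (m : ℂ) • VA.proj m x)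
        = (β : ℂ) • x + ((α : ℂ) • x + (-(t : ℂ) - 1) • x) := by
      have h2 := eq_add_of_sub_eq key
      rw [← hx] at h2
      rw [h2]
      abel
    rw [h1]
    push_cast
    module
  have hfin : (Function.support fun m : ℤ => (m : ℂ) • VA.proj m x).Finite := by
    refine (VA.proj_support_finite x).subset fun m hm => ?_
    simp only [Function.mem_support] at hm ⊢
    intro h0
    exact hm (by rw [h0, smul_zero])
  have hmu : ∀ μ : ℤ, μ ≠ α + β - t - 1 → VA.proj μ x = 0 := by
    intro μ hμ
    have happ := congrArg (VA.proj μ) hsum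
    have hmap : VA.proj μ (∑ᶠ m : ℤ, (m : ℂ) • VA.proj m x)
        = ∑ᶠ m : ℤ, VA.proj μ ((m : ℂ) • VA.proj m x) :=
      (VA.proj μ).toAddMonoidHom.map_finsum hfin
    rw [hmap, map_smul] at happ
    have hsingle : (∑ᶠ m : ℤ, VA.proj μ ((m : ℂ) • VA.proj m x)) = (μ : ℂ) • VA.proj μ x := by
      rw [finsum_eq_single _ μ (fun m hm => by
        rw [map_smul, VA.proj_idem, if_neg (Ne.symm hm), smul_zero])]
      rw [map_smul, proj_of_proj]
    rw [hsingle] at happ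
    have hzero : ((μ : ℂ) - ((α + β - t - 1 : ℤ) : ℂ)) • VA.proj μ x = 0 := by
      rw [sub_smul, happ, sub_self]
    rcases smul_eq_zero.mp hzero with hc | hv
    · exfalso
      apply hμ
      have : ((μ : ℤ) : ℂ) = ((α + β - t - 1 : ℤ) : ℂ) := by
        have := sub_eq_zero.mp hc
        exact_mod_cast this
      exact_mod_cast this
    · exact hv
  have := VA.proj_sum x
  rw [finsum_eq_single _ (α + β - t - 1) (fun μ h => hmu μ h)] at this
  exact this

lemma mode_support_fin (u v : V) (N : ℤ) (c : ℕ → ℂ) :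
    (Function.support fun i : ℕ => c i • VA.mode u (N + i) v).Finite := by
  obtain ⟨N₀, hN₀⟩ := VA.lower_trunc u v
  refine (Set.finite_Iio ((N₀ - N).toNat)).subset fun i hi => ?_
  simp only [Function.mem_support] at hi
  rw [Set.mem_Iio]
  by_contra hle
  push_neg at hle
  have : N₀ ≤ N + (i : ℤ) := by omega
  exact hi (by rw [hN₀ _ this, smul_zero])

lemma resPow_outer_support (u v : V) (N : ℤ) (c : ℤ → ℕ → ℂ) :
    (Function.support fun m : ℤ => ∑ᶠ i : ℕ, c m i • VA.mode (VA.proj m u) (N + i) v).Finite := by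
  refine (VA.proj_support_finite u).subset fun m hm => ?_
  simp only [Function.mem_support] at hm ⊢
  intro h0
  apply hm
  refine finsum_eq_zero_of_forall_eq_zero fun i => ?_
  rw [h0, VA.mode_zero_left, smul_zero]

lemma resPow_homog {h : ℤ} {u : V} (hu : VA.proj h u = u) (N c : ℤ) (v : V) :
    VA.resPow N c u v = ∑ᶠ i : ℕ, cchoose (c + h) i • VA.mode u (N + i) v := by
  unfold GRVertexAlgebra.resPow
  rw [finsum_eq_single _ h (fun m hm => by
    refine finsum_eq_zero_of_forall_eq_zero fun i => ?_
    rw [proj_proj VA hu hm, VA.mode_zero_left, smul_zero])]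
  rw [hu]

lemma resPow_add_left (N c : ℤ) (u u' v : V) :
    VA.resPow N c (u + u') v = VA.resPow N c u v + VA.resPow N c u' v := by
  unfold GRVertexAlgebra.resPow
  have hterm : ∀ m : ℤ,
      (∑ᶠ i : ℕ, cchoose (c + m) i • VA.mode (VA.proj m (u + u')) (N + i) v)
      = (∑ᶠ i : ℕ, cchoose (c + m) i • VA.mode (VA.proj m u) (N + i) v)
        + ∑ᶠ i : ℕ, cchoose (c + m) i • VA.mode (VA.proj m u') (N + i) v := by
    intro m
    rw [← finsum_add_distrib (mode_support_fin VA _ v N _) (mode_support_fin VA _ v N _)]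
    refine finsum_congr fun i => ?_
    rw [map_add, VA.mode_add_left, smul_add]
  rw [finsum_congr hterm]
  exact finsum_add_distrib (resPow_outer_support VA u v N _) (resPow_outer_support VA u' v N _)

lemma resPow_add_right (N c : ℤ) (u v v' : V) :
    VA.resPow N c u (v + v') = VA.resPow N c u v + VA.resPow N c u v' := by
  unfold GRVertexAlgebra.resPow
  have hterm : ∀ m : ℤ,
      (∑ᶠ i : ℕ, cchoose (c + m) i • VA.mode (VA.proj m u) (N + i) (v + v'))
      = (∑ᶠ i : ℕ, cchoose (c + m) i • VA.mode (VA.proj m u) (N + i) v)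
        + ∑ᶠ i : ℕ, cchoose (c + m) i • VA.mode (VA.proj m u) (N + i) v' := by
    intro m
    rw [← finsum_add_distrib (mode_support_fin VA _ v N _) (mode_support_fin VA _ v' N _)]
    refine finsum_congr fun i => ?_
    rw [VA.mode_add_right, smul_add]
  rw [finsum_congr hterm]
  exact finsum_add_distrib (resPow_outer_support VA u v N _) (resPow_outer_support VA u v' N _)

lemma diamondEntry_add_left (u u' v : V) (k n l : ℕ) :
    VA.diamondEntry (u + u') v k n l = VA.diamondEntry u v k n l + VA.diamondEntry u' v k n l := by
  unfold GRVertexAlgebra.diamondEntry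
  rw [← Finset.sum_add_distrib]
  refine Finset.sum_congr rfl fun m _ => ?_
  rw [resPow_add_left, smul_add]

lemma diamondEntry_add_right (u v v' : V) (k n l : ℕ) :
    VA.diamondEntry u (v + v') k n l = VA.diamondEntry u v k n l + VA.diamondEntry u v' k n l := by
  unfold GRVertexAlgebra.diamondEntry
  rw [← Finset.sum_add_distrib]
  refine Finset.sum_congr rfl fun m _ => ?_
  rw [resPow_add_right, smul_add]

end VSide

end HuangAux
namespace HuangAux

open Function GRVertexAlgebra LBGModule

section WSide

variable {V : Type} [AddCommGroup V] [Module ℂ V] {VA : GRVertexAlgebra V}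
variable {W : Type} [AddCommGroup W] [Module ℂ W] (M : LBGModule VA W)

lemma zero_mem_omega (t : ℤ) : (0 : W) ∈ M.OmegaSet t :=
  fun _ k _ _ => M.wmode_zero_right _ k

lemma mem_omega_iff {t : ℤ} {w : W} :
    w ∈ M.OmegaSet t ↔ ∀ (m k : ℤ) (v : V), m - k - 1 < -t → M.wmode (VA.proj m v) k w = 0 :=
  Iff.rfl

lemma sum_mem_omega {ι : Type*} (t : ℤ) (s : Finset ι) (f : ι → W)
    (h : ∀ i ∈ s, f i ∈ M.OmegaSet t) : (∑ i ∈ s, f i) ∈ M.OmegaSet t := by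
  intro m k v hc
  have hmap := map_sum (AddMonoidHom.mk' (fun x : W => M.wmode (VA.proj m v) k x)
    (fun a b => M.wmode_add_right _ _ a b)) f s
  simp only [AddMonoidHom.mk'_apply] at hmap
  rw [hmap]
  refine Finset.sum_eq_zero fun i hi => ?_
  exact h i hi m k v hc

lemma wAct_support (y : V) (k l : ℕ) (w : W) :
    (Function.support fun m : ℤ =>
      M.wmode (VA.proj m y) ((l : ℤ) - (k : ℤ) - 1 + m) w).Finite := by
  refine (VA.proj_support_finite y).subset fun m hm => ?_
  simp only [Function.mem_support] at hm ⊢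
  intro h0
  exact hm (by rw [h0, M.wmode_zero_left])

lemma wAct_add_left (y y' : V) (k l : ℕ) (w : W) :
    M.wAct (y + y') k l w = M.wAct y k l w + M.wAct y' k l w := by
  unfold LBGModule.wAct
  have hterm : ∀ m : ℤ, M.wmode (VA.proj m (y + y')) ((l : ℤ) - (k : ℤ) - 1 + m) w
      = M.wmode (VA.proj m y) ((l : ℤ) - (k : ℤ) - 1 + m) w
        + M.wmode (VA.proj m y') ((l : ℤ) - (k : ℤ) - 1 + m) w := by
    intro m
    rw [map_add, M.wmode_add_left]
  rw [finsum_congr hterm]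
  exact finsum_add_distrib (wAct_support M y k l w) (wAct_support M y' k l w)

lemma wAct_smul_left (c : ℂ) (y : V) (k l : ℕ) (w : W) :
    M.wAct (c • y) k l w = c • M.wAct y k l w := by
  unfold LBGModule.wAct
  rw [smul_finsum' c (wAct_support M y k l w)]
  refine finsum_congr fun m => ?_
  rw [map_smul, M.wmode_smul_left]

lemma wAct_zero_left (k l : ℕ) (w : W) : M.wAct (0 : V) k l w = 0 := by
  unfold LBGModule.wAct
  refine finsum_eq_zero_of_forall_eq_zero fun m => ?_
  rw [map_zero, M.wmode_zero_left]

lemma wAct_zero_w (y : V) (k l : ℕ) : M.wAct y k l (0 : W) = 0 := by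
  unfold LBGModule.wAct
  refine finsum_eq_zero_of_forall_eq_zero fun m => ?_
  rw [M.wmode_zero_right]

lemma wAct_add_w (y : V) (k l : ℕ) (w w' : W) :
    M.wAct y k l (w + w') = M.wAct y k l w + M.wAct y k l w' := by
  unfold LBGModule.wAct
  have hterm : ∀ m : ℤ, M.wmode (VA.proj m y) ((l : ℤ) - (k : ℤ) - 1 + m) (w + w')
      = M.wmode (VA.proj m y) ((l : ℤ) - (k : ℤ) - 1 + m) w
        + M.wmode (VA.proj m y) ((l : ℤ) - (k : ℤ) - 1 + m) w' := by
    intro m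
    rw [M.wmode_add_right]
  rw [finsum_congr hterm]
  exact finsum_add_distrib (wAct_support M y k l w) (wAct_support M y k l w')

lemma wAct_homog {μ : ℤ} {y : V} (hy : VA.proj μ y = y) (k l : ℕ) (w : W) :
    M.wAct y k l w = M.wmode y ((l : ℤ) - (k : ℤ) - 1 + μ) w := by
  unfold LBGModule.wAct
  rw [finsum_eq_single _ μ (fun m hm => by
    rw [proj_proj VA hy hm, M.wmode_zero_left]), hy]

lemma wAct_sum {ι : Type*} (s : Finset ι) (f : ι → V) (k l : ℕ) (w : W) :
    M.wAct (∑ i ∈ s, f i) k l w = ∑ i ∈ s, M.wAct (f i) k l w := by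
  have hmap := map_sum (AddMonoidHom.mk' (fun y : V => M.wAct y k l w)
    (fun a b => wAct_add_left M a b k l w)) f s
  simp only [AddMonoidHom.mk'_apply] at hmap
  exact hmap

/-- The key two-mode annihilation lemma. -/
lemma two_modes : ∀ (N : ℕ) (t : ℤ) (w : W), w ∈ M.OmegaSet t →
    ∀ (α β k₁ k₂ : ℤ) (a b : V), VA.proj α a = a → VA.proj β b = b →
      (α - k₁ - 1) + (β - k₂ - 1) < -t → t + (α - k₁ - 1) < N →
        M.wmode b k₂ (M.wmode a k₁ w) = 0 := by
  intro N
  induction N with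
  | zero =>
    intro t w hw α β k₁ k₂ a b ha hb hlt hN
    have h0 : M.wmode a k₁ w = 0 := by
      rw [← ha]
      exact hw α k₁ a (by omega)
    rw [h0, M.wmode_zero_right]
  | succ N ih =>
    intro t w hw α β k₁ k₂ a b ha hb hlt hN
    by_cases hcase : α - k₁ - 1 < -t
    · have h0 : M.wmode a k₁ w = 0 := by
        rw [← ha]
        exact hw α k₁ a hcase
      rw [h0, M.wmode_zero_right]
    · set l : ℤ := k₂ - β - t with hl
      have hjac := M.jacobi a b w l k₁ (k₂ - l)
      have hLHS : (∑ᶠ i : ℕ, cchoose k₁ i •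
          M.wmode (VA.mode a (l + i) b) (k₁ + (k₂ - l) - i) w) = 0 := by
        refine finsum_eq_zero_of_forall_eq_zero fun i => ?_
        have hwt := mode_homog VA ha hb (l + i)
        rw [← hwt, hw (α + β - (l + i) - 1) (k₁ + (k₂ - l) - i) _ (by omega), smul_zero]
      have hRHS1 : (∑ᶠ i : ℕ, ((-1 : ℂ) ^ (i : ℕ) * cchoose l i) •
          M.wmode a (k₁ + l - i) (M.wmode b ((k₂ - l) + i) w)) = 0 := by
        refine finsum_eq_zero_of_forall_eq_zero fun i => ?_
        have hbw : M.wmode b ((k₂ - l) + i) w = 0 := by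
          rw [← hb]
          exact hw β ((k₂ - l) + i) b (by omega)
        rw [hbw, M.wmode_zero_right, smul_zero]
      rw [hLHS, hRHS1, zero_sub] at hjac
      have hR2 : (∑ᶠ i : ℕ, ((-1 : ℂ) ^ (l + (i : ℤ)) * cchoose l i) •
          M.wmode b ((k₂ - l) + l - i) (M.wmode a (k₁ + i) w)) = 0 :=
        neg_eq_zero.mp hjac.symm
      rw [finsum_eq_single _ 0 (fun i hi => ?_)] at hR2
      · simp only [Nat.cast_zero, add_zero, sub_zero, cchoose_zero', mul_one] at hR2
        have hk : k₂ - l + l = k₂ := by ring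
        rw [hk] at hR2
        rcases smul_eq_zero.mp hR2 with hc | hv
        · exact absurd hc (zpow_ne_zero l (by norm_num))
        · exact hv
      · have hiz : M.wmode b (k₂ - i) (M.wmode a (k₁ + i) w) = 0 := by
          refine ih t w hw α β (k₁ + i) (k₂ - i) a b ha hb (by omega) (by omega)
        have hidx : (k₂ - l) + l - (i : ℤ) = k₂ - i := by ring
        rw [hidx, hiz, smul_zero]

lemma wAct_mem_omega (t : ℤ) {w : W} (hw : w ∈ M.OmegaSet t) (u : V) (k l : ℕ) :
    M.wAct u k l w ∈ M.OmegaSet (t + (k : ℤ) - (l : ℤ)) := by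
  unfold LBGModule.wAct
  have hsub : (Function.support fun m : ℤ =>
      M.wmode (VA.proj m u) ((l : ℤ) - (k : ℤ) - 1 + m) w)
      ⊆ ↑(VA.proj_support_finite u).toFinset := by
    intro m hm
    rw [Set.Finite.coe_toFinset]
    simp only [Function.mem_support] at hm ⊢
    intro h0
    exact hm (by rw [h0, M.wmode_zero_left])
  rw [finsum_eq_sum_of_support_subset _ hsub]
  refine sum_mem_omega M _ _ _ fun h' _ => ?_
  intro m₂ k₂ v₂ hc
  refine two_modes M (t + h' - ((l : ℤ) - (k : ℤ) - 1 + h') - 1 + 1).toNat t w hw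
    h' m₂ ((l : ℤ) - (k : ℤ) - 1 + h') k₂ (VA.proj h' u) (VA.proj m₂ v₂)
    (proj_of_proj VA h' u) (proj_of_proj VA m₂ v₂) (by omega) (by omega)

end WSide

end HuangAux
namespace HuangAux

open Function GRVertexAlgebra LBGModule

section Core

variable {V : Type} [AddCommGroup V] [Module ℂ V] {VA : GRVertexAlgebra V}
variable {W : Type} [AddCommGroup W] [Module ℂ W] (M : LBGModule VA W)

lemma wAct_resPow {h m : ℤ} {u v : V} (hu : VA.proj h u = u) (hv : VA.proj m v = v)
    (N : ℤ) (K L : ℕ) (w : W) :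
    M.wAct (VA.resPow N (L : ℤ) u v) K L w
      = ∑ᶠ i : ℕ, cchoose ((L : ℤ) + h) i •
          M.wmode (VA.mode u (N + i) v) ((L : ℤ) - (K : ℤ) - 1 + (h + m - (N + i) - 1)) w := by
  rw [resPow_homog VA hu N (L : ℤ) v]
  obtain ⟨N₀, hN₀⟩ := VA.lower_trunc u v
  have hmode : ∀ i : ℕ, ¬ i < (N₀ - N).toNat → VA.mode u (N + i) v = 0 := by
    intro i hi
    exact hN₀ _ (by omega)
  have hsub1 : (Function.support fun i : ℕ => cchoose ((L : ℤ) + h) i • VA.mode u (N + i) v)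
      ⊆ ↑(Finset.range ((N₀ - N).toNat)) := by
    intro i hi
    simp only [Function.mem_support] at hi
    simp only [Finset.coe_range, Set.mem_Iio]
    by_contra hc
    exact hi (by rw [hmode i hc, smul_zero])
  rw [finsum_eq_sum_of_support_subset _ hsub1, wAct_sum]
  have hterm : ∀ i ∈ Finset.range ((N₀ - N).toNat),
      M.wAct (cchoose ((L : ℤ) + h) i • VA.mode u (N + i) v) K L w
      = cchoose ((L : ℤ) + h) i •
          M.wmode (VA.mode u (N + i) v) ((L : ℤ) - (K : ℤ) - 1 + (h + m - (N + i) - 1)) w := by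
    intro i _
    rw [wAct_smul_left, wAct_homog M (mode_homog VA hu hv (N + i)) K L w]
  rw [Finset.sum_congr rfl hterm]
  refine (finsum_eq_sum_of_support_subset _ ?_).symm
  intro i hi
  simp only [Function.mem_support] at hi
  simp only [Finset.coe_range, Set.mem_Iio]
  by_contra hc
  exact hi (by rw [hmode i hc, M.wmode_zero_left, smul_zero])

lemma core {h m : ℤ} {u v : V} (k j n : ℕ) (w : W) (hw : w ∈ M.OmegaSet (n : ℤ))
    (hu : VA.proj h u = u) (hv : VA.proj m v = v) :
    M.wAct (VA.diamondEntry u v k j n) k n w = M.wAct u k j (M.wAct v j n w) := by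
  classical
  set A' : ℤ := -(k : ℤ) + (j : ℤ) - (n : ℤ) - 1 with hA
  set a' : ℤ := (j : ℤ) - (k : ℤ) - 1 + h with ha'
  set b' : ℤ := (n : ℤ) - (j : ℤ) - 1 + m with hb'
  have hrhs : M.wAct u k j (M.wAct v j n w) = M.wmode u a' (M.wmode v b' w) := by
    rw [wAct_homog M hv j n w, wAct_homog M hu k j _]
  have hL1 : M.wAct (VA.diamondEntry u v k j n) k n w
      = ∑ m' ∈ Finset.range (j + 1), cchoose A' m' •
          (∑ᶠ i : ℕ, cchoose ((n : ℤ) + h) i •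
            M.wmode (VA.mode u ((A' - m') + i) v)
              ((n : ℤ) - (k : ℤ) - 1 + (h + m - ((A' - m') + i) - 1)) w) := by
    unfold GRVertexAlgebra.diamondEntry
    rw [wAct_sum]
    refine Finset.sum_congr rfl fun m' _ => ?_
    rw [wAct_smul_left]
    have e : -(k : ℤ) + (j : ℤ) - (n : ℤ) - (m' : ℤ) - 1 = A' - m' := by omega
    rw [e, wAct_resPow M hu hv (A' - m') k n w]
  have hstep : ∀ m' ∈ Finset.range (j + 1),
      (cchoose A' m' •
        (∑ᶠ i : ℕ, cchoose ((n : ℤ) + h) i •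
          M.wmode (VA.mode u ((A' - m') + i) v)
            ((n : ℤ) - (k : ℤ) - 1 + (h + m - ((A' - m') + i) - 1)) w))
      = ∑ i ∈ Finset.range (j + 1 - m'), (cchoose A' m' * ((-1 : ℂ) ^ (i : ℕ) * cchoose (A' - m') i)) •
          M.wmode u (a' - ((m' + i : ℕ) : ℤ)) (M.wmode v (b' + ((m' + i : ℕ) : ℤ)) w) := by
    intro m' hm'
    have hm'le : m' ≤ j := Nat.lt_succ_iff.mp (Finset.mem_range.mp hm')
    have hjac := M.jacobi u v w (A' - m') ((n : ℤ) + h) (b' + m')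
    have hfs : (∑ᶠ i : ℕ, cchoose ((n : ℤ) + h) i •
          M.wmode (VA.mode u ((A' - m') + i) v)
            ((n : ℤ) - (k : ℤ) - 1 + (h + m - ((A' - m') + i) - 1)) w)
        = ∑ᶠ i : ℕ, cchoose ((n : ℤ) + h) i •
            M.wmode (VA.mode u ((A' - m') + i) v) ((n : ℤ) + h + (b' + m') - i) w := by
      refine finsum_congr fun i => ?_
      have e : (n : ℤ) - (k : ℤ) - 1 + (h + m - ((A' - m') + i) - 1)
          = (n : ℤ) + h + (b' + m') - i := by omega
      rw [e]
    rw [hfs, hjac]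
    have hR2 : (∑ᶠ i : ℕ, ((-1 : ℂ) ^ ((A' - m') + (i : ℤ)) * cchoose (A' - m') i) •
        M.wmode v ((b' + m') + (A' - m') - i) (M.wmode u (((n : ℤ) + h) + i) w)) = 0 := by
      refine finsum_eq_zero_of_forall_eq_zero fun i => ?_
      have h0 : M.wmode u (((n : ℤ) + h) + i) w = 0 := by
        rw [← hu]
        exact hw h (((n : ℤ) + h) + i) u (by omega)
      rw [h0, M.wmode_zero_right, smul_zero]
    rw [hR2, sub_zero]
    have hsub : (Function.support fun i : ℕ => ((-1 : ℂ) ^ (i : ℕ) * cchoose (A' - m') i) •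
        M.wmode u ((n : ℤ) + h + (A' - m') - i) (M.wmode v ((b' + m') + i) w))
        ⊆ ↑(Finset.range (j + 1 - m')) := by
      intro i hi
      simp only [Function.mem_support] at hi
      simp only [Finset.coe_range, Set.mem_Iio]
      by_contra hc
      push_neg at hc
      have h0 : M.wmode v ((b' + m') + i) w = 0 := by
        rw [← hv]
        exact hw m ((b' + m') + i) v (by omega)
      exact hi (by rw [h0, M.wmode_zero_right, smul_zero])
    rw [finsum_eq_sum_of_support_subset _ hsub, Finset.smul_sum]
    refine Finset.sum_congr rfl fun i hi => ?_
    rw [smul_smul]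
    have hirange : i < j + 1 - m' := Finset.mem_range.mp hi
    have e1 : (n : ℤ) + h + (A' - m') - i = a' - ((m' + i : ℕ) : ℤ) := by
      push_cast
      omega
    have e2 : (b' + m') + (i : ℤ) = b' + ((m' + i : ℕ) : ℤ) := by
      push_cast
      omega
    rw [e1, e2]
  rw [hL1, Finset.sum_congr rfl hstep, hrhs]
  -- reindex the double sum
  set g : ℕ → W := fun q => M.wmode u (a' - q) (M.wmode v (b' + q) w) with hg
  have hsig1 : (∑ m' ∈ Finset.range (j + 1), ∑ i ∈ Finset.range (j + 1 - m'),
      (cchoose A' m' * ((-1 : ℂ) ^ (i : ℕ) * cchoose (A' - m') i)) • g (m' + i))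
      = ∑ p ∈ (Finset.range (j + 1)).sigma (fun m' => Finset.range (j + 1 - m')),
          (cchoose A' p.1 * ((-1 : ℂ) ^ (p.2 : ℕ) * cchoose (A' - p.1) p.2)) • g (p.1 + p.2) :=
    Finset.sum_sigma' _ _ _
  have hsig2 : (∑ p ∈ (Finset.range (j + 1)).sigma (fun m' => Finset.range (j + 1 - m')),
          (cchoose A' p.1 * ((-1 : ℂ) ^ (p.2 : ℕ) * cchoose (A' - p.1) p.2)) • g (p.1 + p.2))
      = ∑ p ∈ (Finset.range (j + 1)).sigma (fun q => Finset.range (q + 1)),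
          (cchoose A' p.2 * ((-1 : ℂ) ^ (p.1 - p.2 : ℕ) * cchoose (A' - p.2) (p.1 - p.2))) • g p.1 := by
    refine Finset.sum_nbij' (fun p => ⟨p.1 + p.2, p.1⟩) (fun p => ⟨p.2, p.1 - p.2⟩) ?_ ?_ ?_ ?_ ?_
    · intro p hp
      simp only [Finset.mem_sigma, Finset.mem_range] at hp ⊢
      omega
    · intro p hp
      simp only [Finset.mem_sigma, Finset.mem_range] at hp ⊢
      omega
    · intro p hp
      simp only [Finset.mem_sigma, Finset.mem_range] at hp
      ext <;> simp <;> omega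
    · intro p hp
      simp only [Finset.mem_sigma, Finset.mem_range] at hp
      ext <;> simp <;> omega
    · intro p hp
      simp only [Finset.mem_sigma, Finset.mem_range] at hp
      have e : p.1 + p.2 - p.1 = p.2 := by omega
      simp only [e]
  rw [hsig1, hsig2, Finset.sum_sigma]
  have hinner : ∀ q ∈ Finset.range (j + 1),
      (∑ m' ∈ Finset.range (q + 1),
        (cchoose A' m' * ((-1 : ℂ) ^ (q - m' : ℕ) * cchoose (A' - m') (q - m'))) • g q)
      = (if q = 0 then (1 : ℂ) else 0) • g q := by
    intro q _
    rw [← Finset.sum_smul, cchoose_sum_delta]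
  rw [Finset.sum_congr rfl hinner]
  rw [Finset.sum_eq_single 0 (fun q _ hq => by rw [if_neg hq, zero_smul])
    (fun h0 => absurd (Finset.mem_range.mpr (Nat.succ_pos j)) h0)]
  rw [if_pos rfl, one_smul, hg]
  simp only [Nat.cast_zero, sub_zero, add_zero]

lemma additive_reduction {F : V → W} (hF : ∀ x y, F (x + y) = F x + F y) (u : V) :
    F u = ∑ h ∈ (VA.proj_support_finite u).toFinset, F (VA.proj h u) := by
  classical
  set S := (VA.proj_support_finite u).toFinset with hS
  have hu0 : u = ∑ h ∈ S, VA.proj h u := by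
    conv_lhs => rw [← VA.proj_sum u]
    exact finsum_eq_sum_of_support_subset _ (by rw [hS, Set.Finite.coe_toFinset])
  set Φ : V →+ W := AddMonoidHom.mk' F hF with hΦ
  calc F u = Φ (∑ h ∈ S, VA.proj h u) := by rw [← hu0]; rfl
    _ = ∑ h ∈ S, Φ (VA.proj h u) := map_sum Φ _ _
    _ = ∑ h ∈ S, F (VA.proj h u) := rfl

lemma key (k j n : ℕ) (w : W) (hw : w ∈ M.OmegaSet (n : ℤ)) (u v : V) :
    M.wAct (VA.diamondEntry u v k j n) k n w = M.wAct u k j (M.wAct v j n w) := by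
  classical
  rw [← sub_eq_zero]
  have hF1 : ∀ x y : V,
      (M.wAct (VA.diamondEntry (x + y) v k j n) k n w - M.wAct (x + y) k j (M.wAct v j n w))
      = (M.wAct (VA.diamondEntry x v k j n) k n w - M.wAct x k j (M.wAct v j n w))
        + (M.wAct (VA.diamondEntry y v k j n) k n w - M.wAct y k j (M.wAct v j n w)) := by
    intro x y
    rw [diamondEntry_add_left, wAct_add_left, wAct_add_left]
    abel
  rw [additive_reduction (F := fun x =>
    M.wAct (VA.diamondEntry x v k j n) k n w - M.wAct x k j (M.wAct v j n w)) hF1 u]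
  refine Finset.sum_eq_zero fun h _ => ?_
  have hF2 : ∀ x y : V,
      (M.wAct (VA.diamondEntry (VA.proj h u) (x + y) k j n) k n w
        - M.wAct (VA.proj h u) k j (M.wAct (x + y) j n w))
      = (M.wAct (VA.diamondEntry (VA.proj h u) x k j n) k n w
          - M.wAct (VA.proj h u) k j (M.wAct x j n w))
        + (M.wAct (VA.diamondEntry (VA.proj h u) y k j n) k n w
            - M.wAct (VA.proj h u) k j (M.wAct y j n w)) := by
    intro x y
    rw [diamondEntry_add_right, wAct_add_left, wAct_add_left, wAct_add_w]
    abel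
  rw [additive_reduction (F := fun y =>
    M.wAct (VA.diamondEntry (VA.proj h u) y k j n) k n w
      - M.wAct (VA.proj h u) k j (M.wAct y j n w)) hF2 v]
  refine Finset.sum_eq_zero fun m _ => ?_
  exact sub_eq_zero.mpr (core M k j n w hw (proj_of_proj VA h u) (proj_of_proj VA m v))

end Core

end HuangAux
/-- Let `V` be a grading-restricted vertex algebra and `W` a lower-bounded generalized
`V`-module.  Then `ϑ_{Gr(W)} : U^∞(V) → End Gr(W)` is an algebra homomorphism for the
product `⋄`, i.e. `Gr(W)` is a `U^∞(V)`-module: the action of `A` maps `Gr_n(W)` into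
`Gr_k(W)` (well-definedness on the quotients), and `ϑ(A ⋄ B) = ϑ(A) ϑ(B)` on `Gr(W)`. -/
theorem thetaGr_algebra_hom {V W : Type} [AddCommGroup V] [Module ℂ V]
    [AddCommGroup W] [Module ℂ W]
    (VA : GRVertexAlgebra V) (M : LBGModule VA W) (A : UInf V) (n k : ℕ) (w : W)
    (hw : w ∈ M.OmegaSet (n : ℤ)) :
    M.wAct (A.1 k n) k n w ∈ M.OmegaSet (k : ℤ) ∧
    (w ∈ M.OmegaSet ((n : ℤ) - 1) →
      M.wAct (A.1 k n) k n w ∈ M.OmegaSet ((k : ℤ) - 1)) ∧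
    (∀ B : UInf V,
      M.wAct ((VA.udiamond A B).1 k n) k n w
        - (∑ᶠ j : ℕ, M.wAct (A.1 k j) k j (M.wAct (B.1 j n) j n w))
      ∈ M.OmegaSet ((k : ℤ) - 1)) := by
  classical
  refine ⟨?_, ?_, ?_⟩
  · have h1 := HuangAux.wAct_mem_omega M (n : ℤ) hw (A.1 k n) k n
    have e : (n : ℤ) + (k : ℤ) - (n : ℤ) = (k : ℤ) := by ring
    rwa [e] at h1
  · intro hw'
    have h1 := HuangAux.wAct_mem_omega M ((n : ℤ) - 1) hw' (A.1 k n) k n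
    have e : (n : ℤ) - 1 + (k : ℤ) - (n : ℤ) = (k : ℤ) - 1 := by ring
    rwa [e] at h1
  · intro B
    have h1 : (VA.udiamond A B).1 k n
        = ∑ᶠ j : ℕ, VA.diamondEntry (A.1 k j) (B.1 j n) k j n := rfl
    have hsub1 : (Function.support fun j : ℕ =>
        VA.diamondEntry (A.1 k j) (B.1 j n) k j n) ⊆ ↑(B.2 n).toFinset := by
      intro j hj
      rw [Set.Finite.coe_toFinset]
      simp only [Function.mem_support] at hj ⊢
      intro h0
      exact hj (by rw [h0, VA.diamondEntry_zero_right])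
    have hsub2 : (Function.support fun j : ℕ =>
        M.wAct (A.1 k j) k j (M.wAct (B.1 j n) j n w)) ⊆ ↑(B.2 n).toFinset := by
      intro j hj
      rw [Set.Finite.coe_toFinset]
      simp only [Function.mem_support] at hj ⊢
      intro h0
      exact hj (by rw [h0, HuangAux.wAct_zero_left, HuangAux.wAct_zero_w])
    have h2 : M.wAct ((VA.udiamond A B).1 k n) k n w
        - (∑ᶠ j : ℕ, M.wAct (A.1 k j) k j (M.wAct (B.1 j n) j n w)) = 0 := by
      rw [h1, finsum_eq_sum_of_support_subset _ hsub1,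
        finsum_eq_sum_of_support_subset _ hsub2, HuangAux.wAct_sum, ← Finset.sum_sub_distrib]
      refine Finset.sum_eq_zero fun j _ => ?_
      exact sub_eq_zero.mpr (HuangAux.key M k j n w hw (A.1 k j) (B.1 j n))
    rw [h2]
    exact HuangAux.zero_mem_omega M ((k : ℤ) - 1)
end
end

section
/- Let V be a grading-restricted vertex algebra. The product ⋄ on U^∞(V) induces a product on A^∞(V) = U^∞(V)/Q^∞(V), also denoted ⋄, such that A^∞(V) equipped with ⋄ is an associative algebra; moreover, for every lower-bounded generalized V-module W, the associated graded space Gr(W) of the filtration {Ω_n(W)}_{n∈ℕ} is an A^∞(V)-module under the action induced by that of U^∞(V). -/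
noncomputable section

open scoped BigOperators

/-! ### Auxiliary lemmas for the main theorem -/

section CchooseLemmas

lemma cchoose_zero' (m : ℤ) : cchoose m 0 = 1 := by simp [cchoose]

lemma cchoose_pascal (l : ℤ) (i : ℕ) :
    cchoose (l + 1) (i + 1) = cchoose l (i + 1) + cchoose l i := by
  unfold cchoose
  have hfac : ((i + 1).factorial : ℂ) = ((i : ℂ) + 1) * (i.factorial : ℂ) := by
    rw [Nat.factorial_succ]; push_cast; ring
  have h1 : (∏ t ∈ Finset.range (i + 1), (((l + 1 : ℤ) : ℂ) - t))
      = ((l : ℂ) + 1) * ∏ t ∈ Finset.range i, ((l : ℂ) - t) := by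
    rw [Finset.prod_range_succ']
    have : ∀ t, (((l + 1 : ℤ) : ℂ) - ((t + 1 : ℕ) : ℂ)) = ((l : ℂ) - t) := by
      intro t; push_cast; ring
    rw [Finset.prod_congr rfl (fun t _ => this t)]
    push_cast; ring
  have h2 : (∏ t ∈ Finset.range (i + 1), ((l : ℂ) - t))
      = (∏ t ∈ Finset.range i, ((l : ℂ) - t)) * ((l : ℂ) - i) := Finset.prod_range_succ _ _
  rw [h1, h2, hfac]
  have hi : (i.factorial : ℂ) ≠ 0 := Nat.cast_ne_zero.mpr (Nat.factorial_ne_zero i)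
  have hi1 : ((i : ℂ) + 1) ≠ 0 := by
    have := Nat.cast_ne_zero (R := ℂ).mpr (Nat.succ_ne_zero i)
    push_cast at this; exact this
  field_simp
  ring

lemma cchoose_trinomial (L : ℤ) {m s : ℕ} (h : m ≤ s) :
    cchoose L m * cchoose (L - m) (s - m) = cchoose L s * (s.choose m : ℂ) := by
  unfold cchoose
  have hsplit : (∏ t ∈ Finset.range s, ((L : ℂ) - t))
      = (∏ t ∈ Finset.range m, ((L : ℂ) - t)) *
        ∏ t ∈ Finset.range (s - m), (((L - (m : ℤ) : ℤ) : ℂ) - (t : ℂ)) := by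
    have h0 := Finset.prod_range_add (fun t => ((L : ℂ) - t)) m (s - m)
    rw [Nat.add_sub_cancel' h] at h0
    rw [h0]
    congr 1
    apply Finset.prod_congr rfl
    intro t _
    push_cast; ring
  have hcf : (s.choose m : ℂ) * (m.factorial : ℂ) * ((s - m).factorial : ℂ)
      = (s.factorial : ℂ) := by
    exact_mod_cast congrArg (Nat.cast : ℕ → ℂ) (Nat.choose_mul_factorial_mul_factorial h)
  have h1 : (m.factorial : ℂ) ≠ 0 := Nat.cast_ne_zero.mpr (Nat.factorial_ne_zero m)
  have h2 : ((s - m).factorial : ℂ) ≠ 0 := Nat.cast_ne_zero.mpr (Nat.factorial_ne_zero _)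
  have h3 : (s.factorial : ℂ) ≠ 0 := Nat.cast_ne_zero.mpr (Nat.factorial_ne_zero s)
  rw [div_mul_div_comm, hsplit, div_mul_eq_mul_div,
    div_eq_div_iff (mul_ne_zero h1 h2) h3]
  linear_combination (-1 : ℂ) * ((∏ t ∈ Finset.range m, ((L : ℂ) - t)) *
    ∏ t ∈ Finset.range (s - m), (((L - (m : ℤ) : ℤ) : ℂ) - (t : ℂ))) * hcf

lemma cchoose_alt_sum (L : ℤ) (s : ℕ) :
    (∑ m ∈ Finset.range (s + 1),
      cchoose L m * ((-1 : ℂ) ^ (s - m) * cchoose (L - m) (s - m)))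
    = if s = 0 then 1 else 0 := by
  have key : ∀ m ∈ Finset.range (s + 1),
      cchoose L m * ((-1 : ℂ) ^ (s - m) * cchoose (L - m) (s - m))
      = cchoose L s * ((-1 : ℂ) ^ (s - m) * (s.choose m : ℂ)) := by
    intro m hm
    have hms : m ≤ s := Nat.lt_succ_iff.mp (Finset.mem_range.mp hm)
    rw [show cchoose L m * ((-1 : ℂ) ^ (s - m) * cchoose (L - m) (s - m))
        = (-1 : ℂ) ^ (s - m) * (cchoose L m * cchoose (L - m) (s - m)) by ring,
      cchoose_trinomial L hms]
    ring
  rw [Finset.sum_congr rfl key, ← Finset.mul_sum]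
  have halt : (∑ m ∈ Finset.range (s + 1), (-1 : ℂ) ^ (s - m) * (s.choose m : ℂ))
      = if s = 0 then 1 else 0 := by
    have h0 := Int.alternating_sum_range_choose (n := s)
    have h2 : ((∑ i ∈ Finset.range (s + 1), (-1 : ℤ) ^ i * s.choose i : ℤ) : ℂ)
        = if s = 0 then 1 else 0 := by
      rw [h0]; split <;> simp
    push_cast at h2
    rw [← h2]
    have hr := Finset.sum_range_reflect
      (fun m => (-1 : ℂ) ^ m * (s.choose m : ℂ)) (s + 1)
    rw [← hr]
    apply Finset.sum_congr rfl
    intro m hm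
    have hms : m ≤ s := Nat.lt_succ_iff.mp (Finset.mem_range.mp hm)
    have hss : s + 1 - 1 - m = s - m := by omega
    rw [hss, Nat.choose_symm hms]
  rw [halt]
  by_cases hs : s = 0
  · subst hs; simp [cchoose_zero']
  · simp [hs]

lemma cchoose_vanish {W : Type*} [AddCommGroup W] [Module ℂ W]
    (N : ℕ) (Y : ℕ → W) (L₀ : ℤ)
    (h : ∀ l : ℤ, l ≤ L₀ → (∑ i ∈ Finset.range N, cchoose l i • Y i) = 0) :
    ∀ i < N, Y i = 0 := by
  induction N generalizing Y L₀ with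
  | zero => intro i hi; omega
  | succ N ih =>
    have hg : ∀ l : ℤ, l ≤ L₀ - 1 →
        (∑ i ∈ Finset.range N, cchoose l i • Y (i + 1)) = 0 := by
      intro l hl
      have e1 := h (l + 1) (by omega)
      have e2 := h l (by omega)
      have key : (∑ i ∈ Finset.range (N + 1), cchoose (l + 1) i • Y i)
          - (∑ i ∈ Finset.range (N + 1), cchoose l i • Y i)
          = ∑ i ∈ Finset.range N, cchoose l i • Y (i + 1) := by
        rw [← Finset.sum_sub_distrib]
        rw [Finset.sum_range_succ' (fun i => cchoose (l + 1) i • Y i - cchoose l i • Y i) N]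
        have h0 : cchoose (l + 1) 0 • Y 0 - cchoose l 0 • Y 0 = 0 := by
          rw [cchoose_zero', cchoose_zero', sub_self]
        rw [h0, add_zero]
        apply Finset.sum_congr rfl
        intro i _
        rw [cchoose_pascal l i, add_smul]
        abel
      rw [e1, e2, sub_zero] at key
      exact key.symm
    have hY1 : ∀ i < N, Y (i + 1) = 0 := ih (fun i => Y (i + 1)) (L₀ - 1) hg
    intro i hi
    rcases Nat.eq_zero_or_pos i with rfl | hpos
    · have e := h L₀ le_rfl
      rw [Finset.sum_range_succ'] at e
      have hz : ∀ j ∈ Finset.range N, cchoose L₀ (j + 1) • Y (j + 1) = 0 := by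
        intro j hj
        rw [hY1 j (Finset.mem_range.mp hj), smul_zero]
      rw [Finset.sum_congr rfl hz, Finset.sum_const_zero, zero_add, cchoose_zero',
        one_smul] at e
      exact e
    · obtain ⟨j, rfl⟩ : ∃ j, i = j + 1 := ⟨i - 1, by omega⟩
      exact hY1 j (by omega)

lemma sum_triangle' {β : Type*} [AddCommMonoid β] (P : ℕ) (f : ℕ → ℕ → β) :
    (∑ m ∈ Finset.range (P + 1), ∑ i ∈ Finset.range (P + 1 - m), f m i)
      = ∑ s ∈ Finset.range (P + 1), ∑ m ∈ Finset.range (s + 1), f m (s - m) := by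
  rw [Finset.sum_sigma', Finset.sum_sigma']
  apply Finset.sum_nbij' (fun x : Σ _ : ℕ, ℕ => (⟨x.1 + x.2, x.1⟩ : Σ _ : ℕ, ℕ))
    (fun x : Σ _ : ℕ, ℕ => (⟨x.2, x.1 - x.2⟩ : Σ _ : ℕ, ℕ))
  · rintro ⟨m, i⟩ hmi
    simp only [Finset.mem_sigma, Finset.mem_range] at hmi ⊢
    omega
  · rintro ⟨s, m⟩ hsm
    simp only [Finset.mem_sigma, Finset.mem_range] at hsm ⊢
    omega
  · rintro ⟨m, i⟩ hmi
    dsimp only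
    rw [Nat.add_sub_cancel_left]
  · rintro ⟨s, m⟩ hsm
    simp only [Finset.mem_sigma, Finset.mem_range] at hsm
    dsimp only
    have h : m + (s - m) = s := by omega
    rw [h]
  · rintro ⟨m, i⟩ hmi
    dsimp only
    rw [Nat.add_sub_cancel_left]

end CchooseLemmas


section ProjLemmas

open GRVertexAlgebra

variable {V : Type} [AddCommGroup V] [Module ℂ V]

lemma proj_homog_eq (VA : GRVertexAlgebra V) {u : V} {a : ℤ} (hu : VA.proj a u = u)
    (m : ℤ) : VA.proj m u = if m = a then u else 0 := by
  conv_lhs => rw [← hu]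
  rw [VA.proj_idem]
  split <;> simp [hu]

lemma proj_idem_self (VA : GRVertexAlgebra V) (m : ℤ) (x : V) :
    VA.proj m (VA.proj m x) = VA.proj m x := by
  rw [VA.proj_idem]; simp

lemma L0op_homog (VA : GRVertexAlgebra V) {u : V} {a : ℤ} (hu : VA.proj a u = u) :
    VA.L0op u = (a : ℂ) • u := by
  unfold GRVertexAlgebra.L0op
  rw [finsum_eq_single _ a]
  · rw [hu]
  · intro m hm
    rw [proj_homog_eq VA hu m, if_neg hm, smul_zero]

lemma proj_apply_finsum (VA : GRVertexAlgebra V) (q : ℤ) (f : ℤ → V)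
    (hf : (Function.support f).Finite) :
    VA.proj q (∑ᶠ m, f m) = ∑ᶠ m, VA.proj q (f m) := by
  have := (VA.proj q).toAddMonoidHom.map_finsum hf
  simpa using this

lemma smul_proj_support (VA : GRVertexAlgebra V) (x : V) :
    (Function.support fun m : ℤ => (m : ℂ) • VA.proj m x).Finite := by
  apply Set.Finite.subset (VA.proj_support_finite x)
  intro m hm
  simp only [Function.mem_support] at hm ⊢
  intro h0
  exact hm (by rw [h0, smul_zero])

lemma eigen_proj (VA : GRVertexAlgebra V) {x : V} {c : ℤ}
    (hx : (∑ᶠ m : ℤ, (m : ℂ) • VA.proj m x) = (c : ℂ) • x)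
    (q : ℤ) : VA.proj q x = if q = c then x else 0 := by
  have hcomm : ∀ q : ℤ, VA.proj q (∑ᶠ m : ℤ, (m : ℂ) • VA.proj m x)
      = (q : ℂ) • VA.proj q x := by
    intro q
    rw [proj_apply_finsum VA q _ (smul_proj_support VA x)]
    have hterm : ∀ m : ℤ, VA.proj q ((m : ℂ) • VA.proj m x)
        = (m : ℂ) • (if q = m then VA.proj m x else 0) := by
      intro m
      rw [map_smul, VA.proj_idem]
    rw [finsum_congr hterm, finsum_eq_single _ q]
    · simp
    · intro m hm
      rw [if_neg (fun h => hm h.symm), smul_zero]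
  have hzero : ∀ m : ℤ, m ≠ c → VA.proj m x = 0 := by
    intro m hm
    have h2 := hcomm m
    rw [hx, map_smul] at h2
    have h3 : ((m : ℂ) - (c : ℂ)) • VA.proj m x = 0 := by
      rw [sub_smul, h2, sub_self]
    have h4 : ((m : ℂ) - (c : ℂ)) ≠ 0 := by
      intro h
      apply hm
      have : (m : ℂ) = (c : ℂ) := by linear_combination h
      exact_mod_cast this
    exact (smul_eq_zero.mp h3).resolve_left h4
  by_cases hq : q = c
  · subst hq
    rw [if_pos rfl]
    have hsum := VA.proj_sum x
    have : (∑ᶠ m : ℤ, VA.proj m x) = VA.proj q x :=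
      finsum_eq_single _ q (fun m hm => hzero m (fun h => hm (h.trans rfl)))
    rw [← this, hsum]
  · rw [if_neg hq]
    exact hzero q hq

lemma L0_finsum_homog (VA : GRVertexAlgebra V) {u : V} {a : ℤ} (hu : VA.proj a u = u) :
    (∑ᶠ m : ℤ, (m : ℂ) • VA.proj m u) = (a : ℂ) • u := by
  rw [finsum_eq_single _ a]
  · rw [hu]
  · intro m hm
    rw [proj_homog_eq VA hu m, if_neg hm, smul_zero]

lemma mode_wt (VA : GRVertexAlgebra V) {u v : V} {a b : ℤ} (hu : VA.proj a u = u)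
    (hv : VA.proj b v = v) (j q : ℤ) :
    VA.proj q (VA.mode u j v) = if q = a + b - j - 1 then VA.mode u j v else 0 := by
  apply eigen_proj
  have hbr := VA.L0_bracket u v j
  rw [L0_finsum_homog VA hv, L0_finsum_homog VA hu, VA.mode_smul_right,
    VA.mode_smul_left] at hbr
  have h1 := sub_eq_iff_eq_add.mp hbr
  rw [h1]
  push_cast
  module

end ProjLemmas

section OmegaLemmas

open GRVertexAlgebra LBGModule

variable {V : Type} [AddCommGroup V] [Module ℂ V] {VA : GRVertexAlgebra V}
variable {W : Type} [AddCommGroup W] [Module ℂ W]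

lemma omega_kills (M : LBGModule VA W) {w : W} {q : ℤ} (hw : w ∈ M.OmegaSet q)
    {x : V} {c : ℤ} (hx : VA.proj c x = x) {k : ℤ} (hk : c - k - 1 < -q) :
    M.wmode x k w = 0 := by
  have := hw c k x hk
  rwa [hx] at this

lemma omega_zero_mem (M : LBGModule VA W) (q : ℤ) : (0 : W) ∈ M.OmegaSet q := by
  intro m k v _
  exact M.wmode_zero_right _ _

lemma omega_add_mem (M : LBGModule VA W) {q : ℤ} {w w' : W} (hw : w ∈ M.OmegaSet q)
    (hw' : w' ∈ M.OmegaSet q) : w + w' ∈ M.OmegaSet q := by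
  intro m k v hmk
  rw [M.wmode_add_right, hw m k v hmk, hw' m k v hmk, add_zero]

lemma omega_smul_mem (M : LBGModule VA W) {q : ℤ} (c : ℂ) {w : W} (hw : w ∈ M.OmegaSet q) :
    c • w ∈ M.OmegaSet q := by
  intro m k v hmk
  rw [M.wmode_smul_right, hw m k v hmk, smul_zero]

lemma omega_neg_mem (M : LBGModule VA W) {q : ℤ} {w : W} (hw : w ∈ M.OmegaSet q) :
    -w ∈ M.OmegaSet q := by
  have := omega_smul_mem M (-1 : ℂ) hw
  rwa [neg_one_smul] at this

lemma omega_sum_mem (M : LBGModule VA W) {q : ℤ} {ι : Type*} (s : Finset ι) (f : ι → W)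
    (h : ∀ i ∈ s, f i ∈ M.OmegaSet q) : (∑ i ∈ s, f i) ∈ M.OmegaSet q := by
  classical
  induction s using Finset.induction_on with
  | empty => simpa using omega_zero_mem M q
  | insert _ _ hnot ih =>
    rw [Finset.sum_insert hnot]
    exact omega_add_mem M (h _ (Finset.mem_insert_self _ _))
      (ih fun i hi => h i (Finset.mem_insert_of_mem hi))

lemma omega_finsum_mem (M : LBGModule VA W) {q : ℤ} {ι : Type*} (f : ι → W)
    (hf : (Function.support f).Finite) (h : ∀ i, f i ∈ M.OmegaSet q) :
    (∑ᶠ i, f i) ∈ M.OmegaSet q := by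
  rw [finsum_eq_sum_of_support_subset f (s := hf.toFinset) (by simp)]
  exact omega_sum_mem M _ f fun i _ => h i

end OmegaLemmas


section DepthLemma

open GRVertexAlgebra LBGModule

variable {V : Type} [AddCommGroup V] [Module ℂ V] {VA : GRVertexAlgebra V}
variable {W : Type} [AddCommGroup W] [Module ℂ W]

/-- The key filtration lemma: a mode of depth `d = b - j - 1` maps `Ω_q(W)` into
`Ω_{q+d}(W)`. -/
lemma depth_mem (M : LBGModule VA W) {q : ℤ} {w : W} (hw : w ∈ M.OmegaSet q)
    {v : V} {b : ℤ} (hv : VA.proj b v = v) (j : ℤ) :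
    M.wmode v j w ∈ M.OmegaSet (q + (b - j - 1)) := by
  intro m k x hmk
  set a : V := VA.proj m x with ha
  have ha' : VA.proj m a = a := proj_idem_self VA m x
  have hed : (m - k - 1) + (b - j - 1) < -q := by omega
  obtain ⟨N₀, hN₀⟩ := M.lower_trunc v w
  set N : ℕ := (N₀ - j).toNat with hN
  have hNsupp : ∀ i : ℕ, N ≤ i → M.wmode v (j + i) w = 0 := by
    intro i hi
    apply hN₀
    have h1 : (N₀ - j : ℤ) ≤ (N : ℤ) := Int.self_le_toNat _
    have h2 : (N : ℤ) ≤ (i : ℤ) := by exact_mod_cast hi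
    omega
  -- the vanishing relations coming from the Jacobi identity
  have key : ∀ l : ℤ, l ≤ -q - (m - k - 1) - 1 →
      (∑ i ∈ Finset.range N,
        cchoose l i • ((-1 : ℂ) ^ i • M.wmode a (k - i) (M.wmode v (j + i) w))) = 0 := by
    intro l hl
    have hjac := M.jacobi a v w l (k - l) j
    -- left side vanishes
    have hlhs : (∑ᶠ i : ℕ, cchoose (k - l) i •
        M.wmode (VA.mode a (l + i) v) ((k - l) + j - i) w) = 0 := by
      rw [finsum_congr (g := fun _ : ℕ => (0 : W)), finsum_zero]
      intro i
      have hx : VA.proj (m + b - (l + i) - 1) (VA.mode a (l + i) v) = VA.mode a (l + i) v := by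
        rw [mode_wt VA ha' hv, if_pos rfl]
      have hk' : (m + b - (l + i) - 1) - ((k - l) + j - i) - 1 < -q := by omega
      rw [omega_kills M hw hx hk', smul_zero]
    -- second right side vanishes
    have hrhs2 : (∑ᶠ i : ℕ, ((-1 : ℂ) ^ (l + i : ℤ) * cchoose l i) •
        M.wmode v (j + l - i) (M.wmode a ((k - l) + i) w)) = 0 := by
      rw [finsum_congr (g := fun _ : ℕ => (0 : W)), finsum_zero]
      intro i
      have hk' : m - ((k - l) + i) - 1 < -q := by omega
      rw [omega_kills M hw ha' hk', M.wmode_zero_right, smul_zero]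
    rw [hlhs, hrhs2, sub_zero] at hjac
    -- remaining sum
    have hsupp : (Function.support fun i : ℕ => ((-1 : ℂ) ^ (i : ℕ) * cchoose l i) •
        M.wmode a ((k - l) + l - i) (M.wmode v (j + i) w)) ⊆ ↑(Finset.range N) := by
      intro i hi
      simp only [Function.mem_support] at hi
      simp only [Finset.coe_range, Set.mem_Iio]
      by_contra hcon
      apply hi
      rw [hNsupp i (by omega), M.wmode_zero_right, smul_zero]
    rw [finsum_eq_sum_of_support_subset _ hsupp] at hjac
    have heq : (∑ i ∈ Finset.range N,
        cchoose l i • ((-1 : ℂ) ^ i • M.wmode a (k - i) (M.wmode v (j + i) w)))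
        = ∑ i ∈ Finset.range N, ((-1 : ℂ) ^ (i : ℕ) * cchoose l i) •
            M.wmode a ((k - l) + l - i) (M.wmode v (j + i) w) := by
      apply Finset.sum_congr rfl
      intro i _
      rw [smul_smul, mul_comm, show (k - l) + l - (i : ℤ) = k - i from by ring]
    rw [heq]
    exact hjac.symm
  -- conclude
  rcases Nat.eq_zero_or_pos N with hN0 | hNpos
  · have h0 : M.wmode v j w = 0 := by
      have := hNsupp 0 (by omega)
      simpa using this
    rw [h0, M.wmode_zero_right]
  · have hvan := cchoose_vanish N
      (fun i => (-1 : ℂ) ^ i • M.wmode a (k - i) (M.wmode v (j + i) w))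
      (-q - (m - k - 1) - 1) key 0 hNpos
    simpa using hvan

end DepthLemma


section WActLemmas

open GRVertexAlgebra LBGModule

variable {V : Type} [AddCommGroup V] [Module ℂ V] {VA : GRVertexAlgebra V}
variable {W : Type} [AddCommGroup W] [Module ℂ W]

lemma wact_term_support (M : LBGModule VA W) (x : V) (c : ℤ) (w : W) :
    (Function.support fun m : ℤ => M.wmode (VA.proj m x) (c + m) w).Finite := by
  apply Set.Finite.subset (VA.proj_support_finite x)
  intro m hm
  simp only [Function.mem_support] at hm ⊢
  intro h0
  exact hm (by rw [h0, M.wmode_zero_left])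

lemma wAct_zero_left (M : LBGModule VA W) (k l : ℕ) (w : W) :
    M.wAct (0 : V) k l w = 0 := by
  unfold LBGModule.wAct
  rw [finsum_congr (g := fun _ : ℤ => (0 : W)), finsum_zero]
  intro m
  rw [map_zero, M.wmode_zero_left]

lemma wAct_zero_right (M : LBGModule VA W) (x : V) (k l : ℕ) :
    M.wAct x k l (0 : W) = 0 := by
  unfold LBGModule.wAct
  rw [finsum_congr (g := fun _ : ℤ => (0 : W)), finsum_zero]
  intro m
  rw [M.wmode_zero_right]

lemma wAct_add_left (M : LBGModule VA W) (x y : V) (k l : ℕ) (w : W) :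
    M.wAct (x + y) k l w = M.wAct x k l w + M.wAct y k l w := by
  unfold LBGModule.wAct
  rw [← finsum_add_distrib (wact_term_support M x _ w) (wact_term_support M y _ w)]
  apply finsum_congr
  intro m
  rw [map_add, M.wmode_add_left]

lemma wAct_smul_left (M : LBGModule VA W) (c : ℂ) (x : V) (k l : ℕ) (w : W) :
    M.wAct (c • x) k l w = c • M.wAct x k l w := by
  unfold LBGModule.wAct
  rw [smul_finsum' c (wact_term_support M x _ w)]
  apply finsum_congr
  intro m
  rw [map_smul, M.wmode_smul_left]

lemma wAct_sub_left (M : LBGModule VA W) (x y : V) (k l : ℕ) (w : W) :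
    M.wAct (x - y) k l w = M.wAct x k l w - M.wAct y k l w := by
  have h := wAct_add_left M (x - y) y k l w
  rw [sub_add_cancel] at h
  rw [h]
  abel

lemma wAct_sum_left (M : LBGModule VA W) {ι : Type*} (s : Finset ι) (f : ι → V)
    (k l : ℕ) (w : W) :
    M.wAct (∑ i ∈ s, f i) k l w = ∑ i ∈ s, M.wAct (f i) k l w := by
  classical
  induction s using Finset.induction_on with
  | empty => simpa using wAct_zero_left M k l w
  | insert _ _ hnot ih =>
    rw [Finset.sum_insert hnot, Finset.sum_insert hnot, wAct_add_left, ih]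

lemma wAct_add_right (M : LBGModule VA W) (x : V) (k l : ℕ) (w w' : W) :
    M.wAct x k l (w + w') = M.wAct x k l w + M.wAct x k l w' := by
  unfold LBGModule.wAct
  rw [← finsum_add_distrib (wact_term_support M x _ w) (wact_term_support M x _ w')]
  apply finsum_congr
  intro m
  rw [M.wmode_add_right]

lemma wAct_finsum_right (M : LBGModule VA W) (x : V) (k l : ℕ) {ι : Type*} (f : ι → W)
    (hf : (Function.support f).Finite) :
    M.wAct x k l (∑ᶠ i, f i) = ∑ᶠ i, M.wAct x k l (f i) := by
  classical
  rw [finsum_eq_sum_of_support_subset f (s := hf.toFinset) (by simp)]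
  rw [finsum_eq_sum_of_support_subset _ (s := hf.toFinset) ?hs]
  case hs =>
    intro i hi
    simp only [Function.mem_support] at hi
    simp only [Set.Finite.coe_toFinset, Function.mem_support]
    intro h0
    exact hi (by rw [h0, wAct_zero_right])
  induction hf.toFinset using Finset.induction_on with
  | empty => simpa using wAct_zero_right M x k l
  | insert _ _ hnot ih =>
    rw [Finset.sum_insert hnot, Finset.sum_insert hnot, wAct_add_right, ih]

/-- `ϑ` shifts the filtration by the difference of the indices. -/
lemma wAct_mem_shift (M : LBGModule VA W) {w : W} {q : ℤ} (hw : w ∈ M.OmegaSet q)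
    (x : V) (k l : ℕ) :
    M.wAct x k l w ∈ M.OmegaSet (q + ((k : ℤ) - (l : ℤ))) := by
  unfold LBGModule.wAct
  apply omega_finsum_mem M _ (wact_term_support M x _ w)
  intro m
  have h := depth_mem M hw (proj_idem_self VA m x) ((l : ℤ) - k - 1 + m)
  have heq : q + (m - ((l : ℤ) - k - 1 + m) - 1) = q + ((k : ℤ) - l) := by ring
  rwa [heq] at h

lemma wAct_mem_omega (M : LBGModule VA W) {w : W} {n : ℕ} (hw : w ∈ M.OmegaSet (n : ℤ))
    (x : V) (p : ℕ) : M.wAct x p n w ∈ M.OmegaSet (p : ℤ) := by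
  have h := wAct_mem_shift M hw x p n
  have heq : (n : ℤ) + ((p : ℤ) - (n : ℤ)) = (p : ℤ) := by ring
  rwa [heq] at h

lemma wAct_mem_omega' (M : LBGModule VA W) {w : W} {p : ℕ}
    (hw : w ∈ M.OmegaSet ((p : ℤ) - 1)) (x : V) (k : ℕ) :
    M.wAct x k p w ∈ M.OmegaSet ((k : ℤ) - 1) := by
  have h := wAct_mem_shift M hw x k p
  have heq : ((p : ℤ) - 1) + ((k : ℤ) - (p : ℤ)) = (k : ℤ) - 1 := by ring
  rwa [heq] at h

end WActLemmas

section ResPowLemmas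

open GRVertexAlgebra

variable {V : Type} [AddCommGroup V] [Module ℂ V]

lemma support_mode_tail (VA : GRVertexAlgebra V) (u v : V) (N : ℤ) (c : ℕ → ℂ) :
    (Function.support fun i : ℕ => c i • VA.mode u (N + i) v).Finite := by
  obtain ⟨N₁, hN₁⟩ := VA.lower_trunc u v
  apply Set.Finite.subset (Finset.range ((N₁ - N).toNat)).finite_toSet
  intro i hi
  simp only [Function.mem_support] at hi
  simp only [Finset.coe_range, Set.mem_Iio]
  by_contra hcon
  push_neg at hcon
  apply hi
  have h1 : (N₁ - N : ℤ) ≤ ((N₁ - N).toNat : ℤ) := Int.self_le_toNat _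
  have h2 : ((N₁ - N).toNat : ℤ) ≤ (i : ℤ) := by exact_mod_cast hcon
  rw [hN₁ (N + i) (by omega), smul_zero]

lemma inner_mode_zero (VA : GRVertexAlgebra V) (v : V) (N : ℤ) (c : ℕ → ℂ) :
    (∑ᶠ i : ℕ, c i • VA.mode 0 (N + i) v) = 0 := by
  rw [finsum_congr (g := fun _ : ℕ => (0 : V)), finsum_zero]
  intro i
  rw [VA.mode_zero_left, smul_zero]

lemma resPow_outer_support (VA : GRVertexAlgebra V) (u v : V) (N l : ℤ) :
    (Function.support fun m : ℤ =>
      ∑ᶠ i : ℕ, cchoose (l + m) i • VA.mode (VA.proj m u) (N + i) v).Finite := by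
  apply Set.Finite.subset (VA.proj_support_finite u)
  intro m hm
  simp only [Function.mem_support] at hm ⊢
  intro h0
  exact hm (by rw [h0, inner_mode_zero])

lemma resPow_homog_left (VA : GRVertexAlgebra V) {u : V} {a : ℤ} (hu : VA.proj a u = u)
    (N l : ℤ) (v : V) :
    VA.resPow N l u v = ∑ᶠ i : ℕ, cchoose (l + a) i • VA.mode u (N + i) v := by
  unfold GRVertexAlgebra.resPow
  rw [finsum_eq_single _ a]
  · rw [hu]
  · intro m hm
    rw [proj_homog_eq VA hu m, if_neg hm, inner_mode_zero]

lemma resPow_add_left (VA : GRVertexAlgebra V) (N l : ℤ) (u u' v : V) :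
    VA.resPow N l (u + u') v = VA.resPow N l u v + VA.resPow N l u' v := by
  unfold GRVertexAlgebra.resPow
  rw [← finsum_add_distrib (resPow_outer_support VA u v N l)
    (resPow_outer_support VA u' v N l)]
  apply finsum_congr
  intro m
  rw [← finsum_add_distrib (support_mode_tail VA (VA.proj m u) v N _)
    (support_mode_tail VA (VA.proj m u') v N _)]
  apply finsum_congr
  intro i
  rw [map_add, VA.mode_add_left, smul_add]

lemma resPow_smul_left (VA : GRVertexAlgebra V) (N l : ℤ) (c : ℂ) (u v : V) :
    VA.resPow N l (c • u) v = c • VA.resPow N l u v := by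
  unfold GRVertexAlgebra.resPow
  rw [smul_finsum' c (resPow_outer_support VA u v N l)]
  apply finsum_congr
  intro m
  rw [smul_finsum' c (support_mode_tail VA (VA.proj m u) v N _)]
  apply finsum_congr
  intro i
  rw [map_smul, VA.mode_smul_left, smul_comm]

lemma resPow_add_right (VA : GRVertexAlgebra V) (N l : ℤ) (u v v' : V) :
    VA.resPow N l u (v + v') = VA.resPow N l u v + VA.resPow N l u v' := by
  unfold GRVertexAlgebra.resPow
  rw [← finsum_add_distrib (resPow_outer_support VA u v N l)
    (resPow_outer_support VA u v' N l)]
  apply finsum_congr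
  intro m
  rw [← finsum_add_distrib (support_mode_tail VA (VA.proj m u) v N _)
    (support_mode_tail VA (VA.proj m u) v' N _)]
  apply finsum_congr
  intro i
  rw [VA.mode_add_right, smul_add]

lemma resPow_smul_right (VA : GRVertexAlgebra V) (N l : ℤ) (c : ℂ) (u v : V) :
    VA.resPow N l u (c • v) = c • VA.resPow N l u v := by
  unfold GRVertexAlgebra.resPow
  rw [smul_finsum' c (resPow_outer_support VA u v N l)]
  apply finsum_congr
  intro m
  rw [smul_finsum' c (support_mode_tail VA (VA.proj m u) v N _)]
  apply finsum_congr
  intro i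
  rw [VA.mode_smul_right, smul_comm]

lemma diamondEntry_add_left (VA : GRVertexAlgebra V) (u u' v : V) (k n l : ℕ) :
    VA.diamondEntry (u + u') v k n l
      = VA.diamondEntry u v k n l + VA.diamondEntry u' v k n l := by
  unfold GRVertexAlgebra.diamondEntry
  rw [← Finset.sum_add_distrib]
  apply Finset.sum_congr rfl
  intro m _
  rw [resPow_add_left, smul_add]

lemma diamondEntry_smul_left (VA : GRVertexAlgebra V) (c : ℂ) (u v : V) (k n l : ℕ) :
    VA.diamondEntry (c • u) v k n l = c • VA.diamondEntry u v k n l := by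
  unfold GRVertexAlgebra.diamondEntry
  rw [Finset.smul_sum]
  apply Finset.sum_congr rfl
  intro m _
  rw [resPow_smul_left, smul_comm]

lemma diamondEntry_add_right (VA : GRVertexAlgebra V) (u v v' : V) (k n l : ℕ) :
    VA.diamondEntry u (v + v') k n l
      = VA.diamondEntry u v k n l + VA.diamondEntry u v' k n l := by
  unfold GRVertexAlgebra.diamondEntry
  rw [← Finset.sum_add_distrib]
  apply Finset.sum_congr rfl
  intro m _
  rw [resPow_add_right, smul_add]

lemma diamondEntry_smul_right (VA : GRVertexAlgebra V) (c : ℂ) (u v : V) (k n l : ℕ) :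
    VA.diamondEntry u (c • v) k n l = c • VA.diamondEntry u v k n l := by
  unfold GRVertexAlgebra.diamondEntry
  rw [Finset.smul_sum]
  apply Finset.sum_congr rfl
  intro m _
  rw [resPow_smul_right, smul_comm]

end ResPowLemmas


section KeyLemma

open GRVertexAlgebra LBGModule

variable {V : Type} [AddCommGroup V] [Module ℂ V] {VA : GRVertexAlgebra V}
variable {W : Type} [AddCommGroup W] [Module ℂ W]

lemma wAct_single (M : LBGModule VA W) {x : V} {c : ℤ} (hx : VA.proj c x = x)
    (k l : ℕ) (w : W) :
    M.wAct x k l w = M.wmode x ((l : ℤ) - k - 1 + c) w := by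
  unfold LBGModule.wAct
  rw [finsum_eq_single _ c]
  · rw [hx]
  · intro m hm
    rw [proj_homog_eq VA hx m, if_neg hm, M.wmode_zero_left]

lemma wAct_homog (M : LBGModule VA W) {u v : V} {a b : ℤ} (hu : VA.proj a u = u)
    (hv : VA.proj b v = v) (j : ℤ) (k l : ℕ) (w : W) :
    M.wAct (VA.mode u j v) k l w
      = M.wmode (VA.mode u j v) ((l : ℤ) - k - 1 + (a + b - j - 1)) w := by
  unfold LBGModule.wAct
  rw [finsum_eq_single _ (a + b - j - 1)]
  · rw [mode_wt VA hu hv, if_pos rfl]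
  · intro m hm
    rw [mode_wt VA hu hv, if_neg hm, M.wmode_zero_left]

lemma wAct_finsum_modes (M : LBGModule VA W) (c : ℕ → ℂ) (u v : V) (N : ℤ)
    (k l : ℕ) (w : W) :
    M.wAct (∑ᶠ i : ℕ, c i • VA.mode u (N + i) v) k l w
      = ∑ᶠ i : ℕ, c i • M.wAct (VA.mode u (N + i) v) k l w := by
  obtain ⟨N₁, hN₁⟩ := VA.lower_trunc u v
  set I : ℕ := (N₁ - N).toNat with hI
  have hz : ∀ i : ℕ, I ≤ i → VA.mode u (N + i) v = 0 := by
    intro i hi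
    apply hN₁
    have h1 : (N₁ - N : ℤ) ≤ (I : ℤ) := Int.self_le_toNat _
    have h2 : (I : ℤ) ≤ (i : ℤ) := by exact_mod_cast hi
    omega
  have hsub1 : (Function.support fun i : ℕ => c i • VA.mode u (N + i) v)
      ⊆ ↑(Finset.range I) := by
    intro i hi
    simp only [Function.mem_support] at hi
    simp only [Finset.coe_range, Set.mem_Iio]
    by_contra hcon
    exact hi (by rw [hz i (by omega), smul_zero])
  have hsub2 : (Function.support fun i : ℕ =>
      c i • M.wAct (VA.mode u (N + i) v) k l w) ⊆ ↑(Finset.range I) := by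
    intro i hi
    simp only [Function.mem_support] at hi
    simp only [Finset.coe_range, Set.mem_Iio]
    by_contra hcon
    exact hi (by rw [hz i (by omega), wAct_zero_left, smul_zero])
  rw [finsum_eq_sum_of_support_subset _ hsub1, finsum_eq_sum_of_support_subset _ hsub2,
    wAct_sum_left]
  apply Finset.sum_congr rfl
  intro i _
  rw [wAct_smul_left]

/-- One application of the Jacobi identity in the key computation. -/
lemma key_jacobi_step (M : LBGModule VA W) {w : W} {n : ℕ} (hw : w ∈ M.OmegaSet (n : ℤ))
    {u v : V} {a b : ℤ} (hu : VA.proj a u = u) (hv : VA.proj b v = v)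
    (k p : ℕ) (m : ℕ) :
    (∑ᶠ i : ℕ, cchoose ((n : ℤ) + a) i •
        M.wAct (VA.mode u ((-(k : ℤ) + p - n - 1 - m) + i) v) k n w)
      = ∑ᶠ i : ℕ, ((-1 : ℂ) ^ (i : ℕ) * cchoose (-(k : ℤ) + p - n - 1 - m) i) •
          M.wmode u (((n : ℤ) + a) + (-(k : ℤ) + p - n - 1 - m) - i)
            (M.wmode v ((b + n - p - 1 + m) + i) w) := by
  set L : ℤ := -(k : ℤ) + p - n - 1 - m with hL
  have hjac := M.jacobi u v w L ((n : ℤ) + a) (b + n - p - 1 + m)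
  -- the second sum on the right of the Jacobi identity vanishes
  have hrhs2 : (∑ᶠ i : ℕ, ((-1 : ℂ) ^ (L + i : ℤ) * cchoose L i) •
      M.wmode v ((b + (n : ℤ) - p - 1 + m) + L - i)
        (M.wmode u (((n : ℤ) + a) + i) w)) = 0 := by
    rw [finsum_congr (g := fun _ : ℕ => (0 : W)), finsum_zero]
    intro i
    have hk' : a - (((n : ℤ) + a) + i) - 1 < -(n : ℤ) := by omega
    rw [omega_kills M hw hu hk', M.wmode_zero_right, smul_zero]
  rw [hrhs2, sub_zero] at hjac
  -- identify the left side of the Jacobi identity with ours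
  have hlhs : (∑ᶠ i : ℕ, cchoose ((n : ℤ) + a) i •
      M.wAct (VA.mode u (L + i) v) k n w)
      = ∑ᶠ i : ℕ, cchoose ((n : ℤ) + a) i •
          M.wmode (VA.mode u (L + i) v) (((n : ℤ) + a) + (b + n - p - 1 + m) - i) w := by
    apply finsum_congr
    intro i
    rw [wAct_homog M hu hv]
    congr 2
    ring
  rw [hlhs, hjac]

/-- The key multiplicativity identity for homogeneous `u`, `v`. -/
lemma key_homog (M : LBGModule VA W) {w : W} {n : ℕ} (hw : w ∈ M.OmegaSet (n : ℤ))
    {u v : V} {a b : ℤ} (hu : VA.proj a u = u) (hv : VA.proj b v = v) (k p : ℕ) :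
    M.wAct (VA.diamondEntry u v k p n) k n w = M.wAct u k p (M.wAct v p n w) := by
  classical
  -- abbreviations
  set T : ℕ → W := fun s =>
    M.wmode u (((n : ℤ) + a) + (-(k : ℤ) + p - n - 1) - s)
      (M.wmode v ((b + n - p - 1) + s) w) with hT
  have hTzero : ∀ s : ℕ, (p : ℕ) < s → T s = 0 := by
    intro s hs
    have hk' : b - ((b + (n : ℤ) - p - 1) + s) - 1 < -(n : ℤ) := by
      have : (p : ℤ) < (s : ℤ) := by exact_mod_cast hs
      omega
    rw [hT]
    simp only
    rw [omega_kills M hw hv hk', M.wmode_zero_right]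
  -- compute the right hand side
  have hrhs : M.wAct u k p (M.wAct v p n w) = T 0 := by
    rw [wAct_single M hv, wAct_single M hu, hT]
    simp only [Nat.cast_zero]
    congr 1
    · ring
    · congr 1
      ring
  -- compute the left hand side
  unfold GRVertexAlgebra.diamondEntry
  rw [wAct_sum_left]
  have hstep : ∀ m ∈ Finset.range (p + 1),
      M.wAct (cchoose (-(k : ℤ) + p - n - 1) m •
          VA.resPow (-(k : ℤ) + p - n - m - 1) n u v) k n w
      = ∑ i ∈ Finset.range (p + 1 - m),
          (cchoose (-(k : ℤ) + p - n - 1) m *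
            ((-1 : ℂ) ^ (i : ℕ) * cchoose (-(k : ℤ) + p - n - 1 - m) i)) • T (m + i) := by
    intro m hm
    rw [wAct_smul_left, resPow_homog_left VA hu]
    have hNeq : (-(k : ℤ) + p - n - m - 1) = (-(k : ℤ) + p - n - 1 - m) := by ring
    rw [hNeq, wAct_finsum_modes, key_jacobi_step M hw hu hv k p m]
    -- convert the finsum to a finite sum over `range (p + 1 - m)`
    have hsub : (Function.support fun i : ℕ =>
        ((-1 : ℂ) ^ (i : ℕ) * cchoose (-(k : ℤ) + p - n - 1 - m) i) •
          M.wmode u (((n : ℤ) + a) + (-(k : ℤ) + p - n - 1 - m) - i)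
            (M.wmode v ((b + n - p - 1 + m) + i) w))
        ⊆ ↑(Finset.range (p + 1 - m)) := by
      intro i hi
      simp only [Function.mem_support] at hi
      simp only [Finset.coe_range, Set.mem_Iio]
      by_contra hcon
      push_neg at hcon
      apply hi
      have hk' : b - ((b + (n : ℤ) - p - 1 + m) + i) - 1 < -(n : ℤ) := by
        have hmp : m ∈ Finset.range (p + 1) := hm
        have h1 : m ≤ p := Nat.lt_succ_iff.mp (Finset.mem_range.mp hmp)
        have h2 : p + 1 - m ≤ i := hcon
        have h3 : (p : ℤ) < (m : ℤ) + (i : ℤ) := by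
          have : p + 1 ≤ m + i := by omega
          exact_mod_cast by omega
        omega
      rw [omega_kills M hw hv hk', M.wmode_zero_right, smul_zero]
    rw [finsum_eq_sum_of_support_subset _ hsub, Finset.smul_sum]
    apply Finset.sum_congr rfl
    intro i _
    rw [smul_smul, hT]
    congr 2
    · push_cast
      ring
    · push_cast
      ring
  rw [Finset.sum_congr rfl hstep]
  -- the triangle reindexing
  rw [sum_triangle' p (fun m i =>
      (cchoose (-(k : ℤ) + p - n - 1) m *
        ((-1 : ℂ) ^ (i : ℕ) * cchoose (-(k : ℤ) + p - n - 1 - m) i)) • T (m + i))]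
  have hdiag : ∀ s ∈ Finset.range (p + 1),
      (∑ m ∈ Finset.range (s + 1),
        (cchoose (-(k : ℤ) + p - n - 1) m *
          ((-1 : ℂ) ^ (s - m : ℕ) * cchoose (-(k : ℤ) + p - n - 1 - m) (s - m))) •
            T (m + (s - m)))
      = (if s = 0 then (1 : ℂ) else 0) • T s := by
    intro s _
    have hTm : ∀ m ∈ Finset.range (s + 1), T (m + (s - m)) = T s := by
      intro m hm
      have : m + (s - m) = s := by
        have := Nat.lt_succ_iff.mp (Finset.mem_range.mp hm)
        omega
      rw [this]
    calc (∑ m ∈ Finset.range (s + 1),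
        (cchoose (-(k : ℤ) + p - n - 1) m *
          ((-1 : ℂ) ^ (s - m : ℕ) * cchoose (-(k : ℤ) + p - n - 1 - m) (s - m))) •
            T (m + (s - m)))
        = ∑ m ∈ Finset.range (s + 1),
            (cchoose (-(k : ℤ) + p - n - 1) m *
              ((-1 : ℂ) ^ (s - m : ℕ) * cchoose (-(k : ℤ) + p - n - 1 - m) (s - m))) •
                T s := by
          apply Finset.sum_congr rfl
          intro m hm
          rw [hTm m hm]
      _ = (∑ m ∈ Finset.range (s + 1),
            cchoose (-(k : ℤ) + p - n - 1) m *
              ((-1 : ℂ) ^ (s - m : ℕ) * cchoose (-(k : ℤ) + p - n - 1 - m) (s - m))) • T s := by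
          rw [Finset.sum_smul]
      _ = (if s = 0 then (1 : ℂ) else 0) • T s := by
          rw [cchoose_alt_sum (-(k : ℤ) + p - n - 1) s]
  rw [Finset.sum_congr rfl hdiag]
  rw [Finset.sum_eq_single_of_mem 0 (by simp)]
  · rw [if_pos rfl, one_smul, hrhs]
  · intro s _ hs
    rw [if_neg hs, zero_smul]

end KeyLemma


section MatrixMult

open GRVertexAlgebra LBGModule

variable {V : Type} [AddCommGroup V] [Module ℂ V] {VA : GRVertexAlgebra V}
variable {W : Type} [AddCommGroup W] [Module ℂ W]

lemma wAct_sum_right (M : LBGModule VA W) (x : V) (k l : ℕ) {ι : Type*} (s : Finset ι)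
    (f : ι → W) :
    M.wAct x k l (∑ i ∈ s, f i) = ∑ i ∈ s, M.wAct x k l (f i) := by
  classical
  induction s using Finset.induction_on with
  | empty => simpa using wAct_zero_right M x k l
  | insert _ _ hnot ih =>
    rw [Finset.sum_insert hnot, Finset.sum_insert hnot, wAct_add_right, ih]

lemma wAct_sub_right (M : LBGModule VA W) (x : V) (k l : ℕ) (w w' : W) :
    M.wAct x k l (w - w') = M.wAct x k l w - M.wAct x k l w' := by
  have h := wAct_add_right M x k l (w - w') w'
  rw [sub_add_cancel] at h
  rw [h]
  abel

lemma diamondEntry_sum_left (VA : GRVertexAlgebra V) {ι : Type*} (s : Finset ι)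
    (f : ι → V) (v : V) (k n l : ℕ) :
    VA.diamondEntry (∑ i ∈ s, f i) v k n l = ∑ i ∈ s, VA.diamondEntry (f i) v k n l := by
  classical
  induction s using Finset.induction_on with
  | empty => simpa using VA.diamondEntry_zero_left v k n l
  | insert _ _ hnot ih =>
    rw [Finset.sum_insert hnot, Finset.sum_insert hnot, diamondEntry_add_left, ih]

lemma diamondEntry_sum_right (VA : GRVertexAlgebra V) {ι : Type*} (s : Finset ι)
    (u : V) (f : ι → V) (k n l : ℕ) :
    VA.diamondEntry u (∑ i ∈ s, f i) k n l = ∑ i ∈ s, VA.diamondEntry u (f i) k n l := by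
  classical
  induction s using Finset.induction_on with
  | empty => simpa using VA.diamondEntry_zero_right u k n l
  | insert _ _ hnot ih =>
    rw [Finset.sum_insert hnot, Finset.sum_insert hnot, diamondEntry_add_right, ih]

/-- The key multiplicativity identity for general `u`, `v`. -/
lemma key_gen (M : LBGModule VA W) {w : W} {n : ℕ} (hw : w ∈ M.OmegaSet (n : ℤ))
    (u v : V) (k p : ℕ) :
    M.wAct (VA.diamondEntry u v k p n) k n w = M.wAct u k p (M.wAct v p n w) := by
  classical
  set Su : Finset ℤ := (VA.proj_support_finite u).toFinset with hSu
  set Sv : Finset ℤ := (VA.proj_support_finite v).toFinset with hSv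
  have hu : u = ∑ a ∈ Su, VA.proj a u := by
    conv_lhs => rw [← VA.proj_sum u]
    exact finsum_eq_sum_of_support_subset _ (by simp [hSu])
  have hv : v = ∑ b ∈ Sv, VA.proj b v := by
    conv_lhs => rw [← VA.proj_sum v]
    exact finsum_eq_sum_of_support_subset _ (by simp [hSv])
  conv_lhs => rw [hu, hv]
  conv_rhs => rw [hu, hv]
  rw [diamondEntry_sum_left, wAct_sum_left, wAct_sum_left]
  apply Finset.sum_congr rfl
  intro a _
  rw [diamondEntry_sum_right, wAct_sum_left, wAct_sum_left, wAct_sum_right]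
  apply Finset.sum_congr rfl
  intro b _
  exact key_homog M hw (proj_idem_self VA a u) (proj_idem_self VA b v) k p

/-- Matrix-level multiplicativity: `ϑ(P ⋄ Q) = ϑ(P) ∘ ϑ(Q)` on representatives. -/
lemma matrix_mult (M : LBGModule VA W) {w : W} {n : ℕ} (hw : w ∈ M.OmegaSet (n : ℤ))
    (P Q : UInf V) (k : ℕ) :
    M.wAct ((VA.udiamond P Q).1 k n) k n w
      = ∑ᶠ p : ℕ, M.wAct (P.1 k p) k p (M.wAct (Q.1 p n) p n w) := by
  classical
  have hentry : (VA.udiamond P Q).1 k n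
      = ∑ᶠ p : ℕ, VA.diamondEntry (P.1 k p) (Q.1 p n) k p n := rfl
  set S : Finset ℕ := (Q.2 n).toFinset with hS
  have hsub1 : (Function.support fun p : ℕ =>
      VA.diamondEntry (P.1 k p) (Q.1 p n) k p n) ⊆ ↑S := by
    intro p hp
    simp only [Function.mem_support] at hp
    simp only [hS, Set.Finite.coe_toFinset, Function.mem_support]
    intro h0
    exact hp (by rw [h0, VA.diamondEntry_zero_right])
  have hsub2 : (Function.support fun p : ℕ =>
      M.wAct (P.1 k p) k p (M.wAct (Q.1 p n) p n w)) ⊆ ↑S := by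
    intro p hp
    simp only [Function.mem_support] at hp
    simp only [hS, Set.Finite.coe_toFinset, Function.mem_support]
    intro h0
    exact hp (by rw [h0, wAct_zero_left, wAct_zero_right])
  rw [hentry, finsum_eq_sum_of_support_subset _ hsub1,
    finsum_eq_sum_of_support_subset _ hsub2, wAct_sum_left]
  apply Finset.sum_congr rfl
  intro p _
  exact key_gen M hw (P.1 k p) (Q.1 p n) k p

lemma uinf_sub_apply (A B : UInf V) (k l : ℕ) :
    (A - B).1 k l = A.1 k l - B.1 k l := rfl

end MatrixMult

/-- Let `V` be a grading-restricted vertex algebra.  The product `⋄` on `U^∞(V)` induces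
a product on `A^∞(V) = U^∞(V)/Q^∞(V)` making it an associative algebra (the product is
well defined modulo `Q^∞(V)` and associative modulo `Q^∞(V)`); moreover for every
lower-bounded generalized `V`-module `W`, the associated graded space `Gr(W)` of the
filtration `{Ω_n(W)}` is an `A^∞(V)`-module under the induced action (elements of
`Q^∞(V)` act as zero on `Gr(W)`). -/
theorem Ainf_associative_algebra {V : Type} [AddCommGroup V] [Module ℂ V]
    (VA : GRVertexAlgebra V) :
    (∀ A A' B B' : UInf V, VA.memQ (A - A') → VA.memQ (B - B') →
      VA.memQ (VA.udiamond A B - VA.udiamond A' B')) ∧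
    (∀ A B C : UInf V,
      VA.memQ (VA.udiamond (VA.udiamond A B) C - VA.udiamond A (VA.udiamond B C))) ∧
    (∀ (W : Type) (_ : AddCommGroup W) (_ : Module ℂ W) (M : LBGModule VA W)
        (A : UInf V), VA.memQ A → ∀ (n k : ℕ) (w : W), w ∈ M.OmegaSet (n : ℤ) →
      M.wAct (A.1 k n) k n w ∈ M.OmegaSet ((k : ℤ) - 1)) := by
  classical
  refine ⟨?_, ?_, ?_⟩
  · -- the product is well defined modulo Q^∞(V)
    intro A A' B B' hA hB
    intro W _ _ M n k w hw
    rw [uinf_sub_apply, wAct_sub_left, matrix_mult M hw A B k, matrix_mult M hw A' B' k]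
    set F : ℕ → W := fun p => M.wAct (A.1 k p) k p (M.wAct (B.1 p n) p n w) with hF
    set F' : ℕ → W := fun p => M.wAct (A'.1 k p) k p (M.wAct (B'.1 p n) p n w) with hF'
    have hFsupp : (Function.support F).Finite := by
      apply Set.Finite.subset (B.2 n)
      intro p hp
      simp only [Function.mem_support] at hp ⊢
      intro h0
      exact hp (by rw [hF]; simp only; rw [h0, wAct_zero_left, wAct_zero_right])
    have hF'supp : (Function.support F').Finite := by
      apply Set.Finite.subset (B'.2 n)
      intro p hp
      simp only [Function.mem_support] at hp ⊢
      intro h0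
      exact hp (by rw [hF']; simp only; rw [h0, wAct_zero_left, wAct_zero_right])
    rw [← finsum_sub_distrib hFsupp hF'supp]
    apply omega_finsum_mem M _ (Set.Finite.subset (hFsupp.union hF'supp) ?hsupp)
    case hsupp =>
      intro p hp
      simp only [Function.mem_support] at hp
      simp only [Set.mem_union, Function.mem_support]
      by_contra hcon
      push_neg at hcon
      exact hp (by rw [hcon.1, hcon.2, sub_self])
    intro p
    have hYp' : M.wAct (B'.1 p n) p n w ∈ M.OmegaSet (p : ℤ) := wAct_mem_omega M hw _ p
    have hdiff : M.wAct (B.1 p n) p n w - M.wAct (B'.1 p n) p n w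
        = M.wAct ((B - B').1 p n) p n w := by
      rw [uinf_sub_apply, wAct_sub_left]
    have hsplit : F p - F' p
        = M.wAct (A.1 k p) k p
            (M.wAct (B.1 p n) p n w - M.wAct (B'.1 p n) p n w)
          + M.wAct ((A - A').1 k p) k p (M.wAct (B'.1 p n) p n w) := by
      rw [wAct_sub_right, uinf_sub_apply, wAct_sub_left, hF, hF']
      simp only
      abel
    show F p - F' p ∈ M.OmegaSet ((k : ℤ) - 1)
    rw [hsplit]
    apply omega_add_mem M
    · rw [hdiff]
      exact wAct_mem_omega' M (hB W _ _ M n p w hw) (A.1 k p) k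
    · exact hA W _ _ M p k _ hYp'
  · -- associativity modulo Q^∞(V)
    intro A B C
    intro W _ _ M n k w hw
    rw [uinf_sub_apply, wAct_sub_left]
    set y : ℕ → W := fun p => M.wAct (C.1 p n) p n w with hy
    set G : ℕ → ℕ → W := fun r p => M.wAct (A.1 k r) k r (M.wAct (B.1 r p) r p (y p))
      with hG
    set SC : Finset ℕ := (C.2 n).toFinset with hSC
    set R : Finset ℕ := SC.biUnion (fun p => (B.2 p).toFinset) with hR
    have hyp : ∀ p : ℕ, y p ∈ M.OmegaSet (p : ℤ) := fun p => wAct_mem_omega M hw _ p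
    have hy0 : ∀ p : ℕ, p ∉ SC → y p = 0 := by
      intro p hp
      simp only [hSC, Set.Finite.mem_toFinset, Function.mem_support, not_not] at hp
      rw [hy]; simp only; rw [hp, wAct_zero_left]
    have hB0 : ∀ p ∈ SC, ∀ r : ℕ, r ∉ R → B.1 r p = 0 := by
      intro p hp r hr
      simp only [hR, Finset.mem_biUnion] at hr
      push_neg at hr
      by_contra hcon
      exact hr p hp (by simp only [Set.Finite.mem_toFinset, Function.mem_support]; exact hcon)
    -- first association
    have hE1 : M.wAct ((VA.udiamond (VA.udiamond A B) C).1 k n) k n w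
        = ∑ p ∈ SC, ∑ r ∈ R, G r p := by
      rw [matrix_mult M hw (VA.udiamond A B) C k]
      have hcongr : ∀ p : ℕ, M.wAct ((VA.udiamond A B).1 k p) k p (y p)
          = ∑ᶠ r : ℕ, G r p := fun p => matrix_mult M (hyp p) A B k
      rw [finsum_congr hcongr]
      have houter : (Function.support fun p : ℕ => ∑ᶠ r : ℕ, G r p) ⊆ ↑SC := by
        intro p hp
        simp only [Function.mem_support] at hp
        by_contra hcon
        apply hp
        rw [finsum_congr (g := fun _ : ℕ => (0 : W)), finsum_zero]
        intro r
        rw [hG]; simp only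
        rw [hy0 p hcon, wAct_zero_right, wAct_zero_right]
      rw [finsum_eq_sum_of_support_subset _ houter]
      apply Finset.sum_congr rfl
      intro p hp
      have hinner : (Function.support fun r : ℕ => G r p) ⊆ ↑R := by
        intro r hr
        simp only [Function.mem_support] at hr
        by_contra hcon
        apply hr
        rw [hG]; simp only
        rw [hB0 p hp r hcon, wAct_zero_left, wAct_zero_right]
      rw [finsum_eq_sum_of_support_subset _ hinner]
    -- second association
    have hE2 : M.wAct ((VA.udiamond A (VA.udiamond B C)).1 k n) k n w
        = ∑ r ∈ R, ∑ p ∈ SC, G r p := by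
      rw [matrix_mult M hw A (VA.udiamond B C) k]
      have hcongr : ∀ r : ℕ, M.wAct (A.1 k r) k r
          (M.wAct ((VA.udiamond B C).1 r n) r n w) = ∑ p ∈ SC, G r p := by
        intro r
        rw [matrix_mult M hw B C r]
        have hinner : (Function.support fun p : ℕ =>
            M.wAct (B.1 r p) r p (M.wAct (C.1 p n) p n w)) ⊆ ↑SC := by
          intro p hp
          simp only [Function.mem_support] at hp
          by_contra hcon
          apply hp
          have := hy0 p hcon
          rw [hy] at this; simp only at this
          rw [this, wAct_zero_right]
        rw [finsum_eq_sum_of_support_subset _ hinner, wAct_sum_right]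
      rw [finsum_congr hcongr]
      have houter : (Function.support fun r : ℕ => ∑ p ∈ SC, G r p) ⊆ ↑R := by
        intro r hr
        simp only [Function.mem_support] at hr
        by_contra hcon
        apply hr
        apply Finset.sum_eq_zero
        intro p hp
        rw [hG]; simp only
        rw [hB0 p hp r hcon, wAct_zero_left, wAct_zero_right]
      rw [finsum_eq_sum_of_support_subset _ houter]
    rw [hE1, hE2, Finset.sum_comm, sub_self]
    exact omega_zero_mem M _
  · -- Q^∞(V) acts as zero on Gr(W)
    intro W _ _ M A hA n k w hw
    exact hA W _ _ M n k w hw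
end
end
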